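/- arXiv:math/0603285 — 5 statements merged into one kernel-verified Lean document; each statement's English description precedes it below -/
import Mathlib

section
/- The map sending a composition σ of n with m parts, each part at most n, to the composition with parts (n+1 - σ_i) is an involution between compositions of n with m parts and compositions of m(n+1) - n with m parts, and it sends valleys to peaks: the number of valleys of σ equals the number of peaks of its image. -/
/-- Number of peaks of a list: indices `i` with `l (i-1) < l i > l (i+1)`. -/
def peaksCount (l : List ℕ) : ℕ :=
  (List.range l.length).countP fun i =>
    decide (0 < i ∧ i + 1 < l.length ∧
      l.getD (i - 1) 0 < l.getD i 0 ∧ l.getD (i + 1) 0 < l.getD i 0)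

/-- Number of valleys of a list: indices `i` with `l (i-1) > l i < l (i+1)`. -/
def valleysCount (l : List ℕ) : ℕ :=
  (List.range l.length).countP fun i =>
    decide (0 < i ∧ i + 1 < l.length ∧
      l.getD i 0 < l.getD (i - 1) 0 ∧ l.getD i 0 < l.getD (i + 1) 0)

lemma sum_aux (n : ℕ) (l : List ℕ) (hle : ∀ x ∈ l, x ≤ n) :
    (l.map (fun a => n + 1 - a)).sum + l.sum = l.length * (n + 1) := by
  induction l with
  | nil => simp
  | cons a t ih =>
    have ha := hle a List.mem_cons_self
    have := ih (fun x hx => hle x (List.mem_cons_of_mem _ hx))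
    simp only [List.map_cons, List.sum_cons, List.length_cons, Nat.succ_mul]
    omega

/-- The map `σᵢ ↦ n + 1 - σᵢ` sends a composition of `n` with `m` parts to a
composition of `m * (n + 1) - n` with `m` parts, is an involution, and sends
valleys to peaks. -/
theorem complement_composition (n m : ℕ) (l : List ℕ)
    (hpos : ∀ x ∈ l, 0 < x) (hsum : l.sum = n) (hlen : l.length = m) :
    (∀ x ∈ l.map (fun a => n + 1 - a), 0 < x) ∧
    (l.map (fun a => n + 1 - a)).sum = m * (n + 1) - n ∧
    (l.map (fun a => n + 1 - a)).length = m ∧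
    ((l.map (fun a => n + 1 - a)).map (fun a => n + 1 - a)) = l ∧
    valleysCount l = peaksCount (l.map (fun a => n + 1 - a)) := by
  have hle : ∀ x ∈ l, x ≤ n := by
    intro x hx
    rw [← hsum]
    exact List.single_le_sum (fun y _ => Nat.zero_le y) x hx
  refine ⟨?_, ?_, ?_, ?_, ?_⟩
  · intro x hx
    obtain ⟨a, ha, rfl⟩ := List.mem_map.1 hx
    have := hle a ha
    omega
  · have := sum_aux n l hle
    rw [hsum, hlen] at this
    omega
  · simp [hlen]
  · rw [List.map_map]
    conv_rhs => rw [← List.map_id l]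
    apply List.map_congr_left
    intro a ha
    have h1 := hle a ha
    have h2 := hpos a ha
    simp only [Function.comp_apply, id]
    omega
  · unfold valleysCount peaksCount
    rw [List.length_map]
    apply List.countP_congr
    intro i hi
    simp only [List.mem_range] at hi
    simp only [decide_eq_true_eq, List.length_map]
    have hg : ∀ j, j < l.length →
        (l.map (fun a => n + 1 - a)).getD j 0 = n + 1 - l.getD j 0 := by
      intro j hj
      rw [List.getD_eq_getElem _ _ (by simpa using hj), List.getD_eq_getElem _ _ hj,
        List.getElem_map]
    have hb : ∀ j, j < l.length → l.getD j 0 ≤ n := by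
      intro j hj
      rw [List.getD_eq_getElem _ _ hj]
      exact hle _ (List.getElem_mem _)
    by_cases hc : 0 < i ∧ i + 1 < l.length
    · obtain ⟨h0, h1⟩ := hc
      rw [hg i (by omega), hg (i-1) (by omega), hg (i+1) (by omega)]
      have ha := hb i (by omega)
      have ha1 := hb (i-1) (by omega)
      have ha2 := hb (i+1) (by omega)
      omega
    · constructor <;> rintro ⟨h0, h1, -⟩ <;> exact absurd ⟨h0, h1⟩ hc
end

section
/- For every s ≥ 1, the sum Σ x^{i₁+…+i_{2s}} over all sequences of positive integers with 1 ≤ i₁ < i₂ ≤ i₃ < i₄ ≤ … ≤ i_{2s-1} < i_{2s} (alternating strict and weak inequalities, starting strict) equals x^{s(s+2)} / ∏_{j=1}^{2s}(1 - x^j) as formal power series. -/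
open PowerSeries

namespace AltGF


def stair (k : ℕ) : ℕ := k / 2 + k % 2 + 1

def buildF (N : ℕ) (g : Fin N → ℕ) (k : Fin N) : ℕ :=
  stair k + ∑ m : Fin N, if (m : ℕ) ≤ (k : ℕ) then g m else 0

def diffE (N : ℕ) (f : Fin N → ℕ) (k : Fin N) : ℕ :=
  if (k : ℕ) = 0 then f k - 1
  else f k - f ⟨(k : ℕ) - 1, lt_of_le_of_lt (Nat.sub_le _ _) k.isLt⟩ - (k : ℕ) % 2

lemma sum_ite_le (m c N : ℕ) :
    ∑ k ∈ Finset.range N, (if m ≤ k then c else 0) = (N - m) * c := by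
  induction N with
  | zero => simp
  | succ n ih =>
    rw [Finset.sum_range_succ, ih]
    by_cases h : m ≤ n
    · rw [if_pos h, show n + 1 - m = (n - m) + 1 by omega, add_mul, one_mul]
    · rw [if_neg h, show n + 1 - m = 0 by omega, show n - m = 0 by omega, add_zero]

lemma sum_stair (s : ℕ) : ∑ k ∈ Finset.range (2 * s), stair k = s * (s + 2) := by
  induction s with
  | zero => simp
  | succ t ih =>
    rw [show 2 * (t + 1) = (2 * t) + 1 + 1 by ring, Finset.sum_range_succ,
      Finset.sum_range_succ, ih, show stair (2 * t) = t + 1 by unfold stair; omega,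
      show stair (2 * t + 1) = t + 2 by unfold stair; omega]
    ring

lemma buildF_pos (N : ℕ) (g : Fin N → ℕ) (k : Fin N) : 0 < buildF N g k :=
  Nat.lt_of_lt_of_le (by unfold stair; omega) (Nat.le_add_right _ _)

lemma buildF_zero (N : ℕ) (g : Fin N → ℕ) (h : 0 < N) :
    buildF N g ⟨0, h⟩ = 1 + g ⟨0, h⟩ := by
  unfold buildF
  have : ∀ m : Fin N, (if (m : ℕ) ≤ ((⟨0, h⟩ : Fin N) : ℕ) then g m else 0)
      = (if m = ⟨0, h⟩ then g m else 0) := by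
    intro m
    apply if_congr _ rfl rfl
    simp [Fin.ext_iff]
  rw [Finset.sum_congr rfl (fun m _ => this m), Finset.sum_ite_eq']
  simp [stair]

lemma buildF_succ (N : ℕ) (g : Fin N → ℕ) (k : ℕ) (h : k + 1 < N) :
    buildF N g ⟨k + 1, h⟩ = buildF N g ⟨k, by omega⟩ + g ⟨k + 1, h⟩ + (k + 1) % 2 := by
  unfold buildF
  have hst : stair (k + 1) = stair k + (k + 1) % 2 := by unfold stair; omega
  have hsum : (∑ m : Fin N, if (m : ℕ) ≤ ((⟨k + 1, h⟩ : Fin N) : ℕ) then g m else 0)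
      = (∑ m : Fin N, if (m : ℕ) ≤ ((⟨k, by omega⟩ : Fin N) : ℕ) then g m else 0)
        + g ⟨k + 1, h⟩ := by
    have key : ∀ m : Fin N, (if (m : ℕ) ≤ k + 1 then g m else 0)
        = (if (m : ℕ) ≤ k then g m else 0) + (if m = ⟨k + 1, h⟩ then g m else 0) := by
      intro m
      by_cases h1 : (m : ℕ) ≤ k
      · have h2 : ¬ m = ⟨k + 1, h⟩ := by
          simp only [Fin.ext_iff]; omega
        rw [if_pos (by omega), if_pos h1, if_neg h2, add_zero]
      · by_cases h2 : m = ⟨k + 1, h⟩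
        · rw [if_pos (by rw [h2]), if_neg h1, if_pos h2, zero_add]
        · have h3 : ¬ (m : ℕ) ≤ k + 1 := by
            simp only [Fin.ext_iff] at h2; omega
          rw [if_neg h3, if_neg h1, if_neg h2, add_zero]
    calc (∑ m : Fin N, if (m : ℕ) ≤ ((⟨k + 1, h⟩ : Fin N) : ℕ) then g m else 0)
        = ∑ m : Fin N, ((if (m : ℕ) ≤ k then g m else 0)
            + (if m = ⟨k + 1, h⟩ then g m else 0)) :=
          Finset.sum_congr rfl (fun m _ => key m)
      _ = _ := by
          rw [Finset.sum_add_distrib, Finset.sum_ite_eq']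
          simp
  rw [hsum]
  simp only [Fin.val_mk]
  omega

lemma sum_buildF (N : ℕ) (g : Fin N → ℕ) :
    ∑ k, buildF N g k
      = (∑ k ∈ Finset.range N, stair k) + ∑ m : Fin N, (N - (m : ℕ)) * g m := by
  unfold buildF
  rw [Finset.sum_add_distrib]
  congr 1
  · exact Fin.sum_univ_eq_sum_range stair N
  · rw [Finset.sum_comm]
    refine Finset.sum_congr rfl (fun m _ => ?_)
    rw [Fin.sum_univ_eq_sum_range (fun k => if (m : ℕ) ≤ k then g m else 0) N]
    exact sum_ite_le _ _ _

lemma diffE_buildF (N : ℕ) (g : Fin N → ℕ) : diffE N (buildF N g) = g := by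
  funext k
  rcases k with ⟨kv, hk⟩
  cases kv with
  | zero =>
    have h0 : diffE N (buildF N g) ⟨0, hk⟩ = buildF N g ⟨0, hk⟩ - 1 := by
      simp [diffE]
    rw [h0, buildF_zero N g hk]
    omega
  | succ j =>
    have h0 : diffE N (buildF N g) ⟨j + 1, hk⟩
        = buildF N g ⟨j + 1, hk⟩ - buildF N g ⟨j, by omega⟩ - (j + 1) % 2 := by
      simp [diffE]
    rw [h0, buildF_succ N g j hk]
    omega

lemma step_le (s : ℕ) (f : Fin (2 * s) → ℕ)
    (h2 : ∀ l : Fin s, f ⟨2 * (l : ℕ), by have := l.isLt; linarith⟩ <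
        f ⟨2 * (l : ℕ) + 1, by have := l.isLt; linarith⟩)
    (h3 : ∀ l : Fin s, ∀ h : 2 * (l : ℕ) + 2 < 2 * s,
        f ⟨2 * (l : ℕ) + 1, by linarith⟩ ≤ f ⟨2 * (l : ℕ) + 2, h⟩)
    (k : ℕ) (hk : k + 1 < 2 * s) :
    f ⟨k, by omega⟩ + (k + 1) % 2 ≤ f ⟨k + 1, hk⟩ := by
  have fc : ∀ (a b : ℕ) (ha : a < 2 * s) (hb : b < 2 * s), a = b → f ⟨a, ha⟩ = f ⟨b, hb⟩ := by
    intro a b ha hb h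
    subst h
    rfl
  rcases Nat.even_or_odd k with ⟨t, ht⟩ | ⟨t, ht⟩
  · have hl : t < s := by omega
    have h2l := h2 ⟨t, hl⟩
    simp only [Fin.val_mk] at h2l
    rw [fc (2 * t) k (by omega) (by omega) (by omega),
        fc (2 * t + 1) (k + 1) (by omega) hk (by omega)] at h2l
    omega
  · have hl : t < s := by omega
    have h3l := h3 ⟨t, hl⟩ (by simp only [Fin.val_mk]; omega)
    simp only [Fin.val_mk] at h3l
    rw [fc (2 * t + 1) k (by omega) (by omega) (by omega),
        fc (2 * t + 2) (k + 1) (by omega) hk (by omega)] at h3l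
    omega

lemma buildF_diffE (s : ℕ) (f : Fin (2 * s) → ℕ)
    (hpos : ∀ i, 0 < f i)
    (h2 : ∀ l : Fin s, f ⟨2 * (l : ℕ), by have := l.isLt; linarith⟩ <
        f ⟨2 * (l : ℕ) + 1, by have := l.isLt; linarith⟩)
    (h3 : ∀ l : Fin s, ∀ h : 2 * (l : ℕ) + 2 < 2 * s,
        f ⟨2 * (l : ℕ) + 1, by linarith⟩ ≤ f ⟨2 * (l : ℕ) + 2, h⟩) :
    buildF (2 * s) (diffE (2 * s) f) = f := by
  have main : ∀ k (hk : k < 2 * s), buildF (2 * s) (diffE (2 * s) f) ⟨k, hk⟩ = f ⟨k, hk⟩ := by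
    intro k
    induction k with
    | zero =>
      intro hk
      rw [buildF_zero _ _ hk]
      have h0 : diffE (2 * s) f ⟨0, hk⟩ = f ⟨0, hk⟩ - 1 := by simp [diffE]
      have := hpos ⟨0, hk⟩
      omega
    | succ j ih =>
      intro hk
      rw [buildF_succ _ _ j hk, ih (by omega)]
      have h0 : diffE (2 * s) f ⟨j + 1, hk⟩
          = f ⟨j + 1, hk⟩ - f ⟨j, by omega⟩ - (j + 1) % 2 := by simp [diffE]
      have hstep := step_le s f h2 h3 j hk
      omega
  funext k
  rcases k with ⟨kv, hk⟩
  exact main kv hk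



lemma finite_of_bdd {N m : ℕ} {P : (Fin N → ℕ) → Prop}
    (hP : ∀ g, P g → ∀ j, g j ≤ m) : Finite {g : Fin N → ℕ // P g} := by
  apply Finite.of_injective
    (fun p : {g : Fin N → ℕ // P g} =>
      fun j : Fin N => (⟨p.1 j, Nat.lt_succ_of_le (hP p.1 p.2 j)⟩ : Fin (m + 1)))
  intro p q h
  apply Subtype.ext
  funext j
  simpa [Fin.ext_iff] using congrFun h j

lemma bdd_of_sum_eq {N m c : ℕ} (g : Fin N → ℕ)
    (hg : (∑ j : Fin N, ((j : ℕ) + 1) * g j) + c = m) (j : Fin N) : g j ≤ m := by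
  have h1 : ((j : ℕ) + 1) * g j ≤ ∑ j : Fin N, ((j : ℕ) + 1) * g j :=
    Finset.single_le_sum (f := fun i : Fin N => ((i : ℕ) + 1) * g i)
      (fun i _ => Nat.zero_le _) (Finset.mem_univ j)
  have h2 : g j ≤ ((j : ℕ) + 1) * g j := Nat.le_mul_of_pos_left _ (by omega)
  omega

instance wsetFinite (N m : ℕ) :
    Finite {g : Fin N → ℕ // ∑ j : Fin N, ((j : ℕ) + 1) * g j = m} :=
  finite_of_bdd fun g hg => bdd_of_sum_eq (c := 0) (m := m) g (by omega)

instance wsetFinite' (N m c : ℕ) :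
    Finite {g : Fin N → ℕ // (∑ j : Fin N, ((j : ℕ) + 1) * g j) + c = m} :=
  finite_of_bdd fun g hg => bdd_of_sum_eq g hg

noncomputable def wcount (N m : ℕ) : ℕ :=
  Nat.card {g : Fin N → ℕ // ∑ j : Fin N, ((j : ℕ) + 1) * g j = m}

lemma sum_split (N : ℕ) (g : Fin (N + 1) → ℕ) :
    ∑ j : Fin (N + 1), ((j : ℕ) + 1) * g j
      = (∑ j : Fin N, ((j : ℕ) + 1) * g j.castSucc) + (N + 1) * g (Fin.last N) := by
  rw [Fin.sum_univ_castSucc]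
  simp

lemma sum_snoc (N : ℕ) (g : Fin N → ℕ) (v : ℕ) :
    ∑ j : Fin (N + 1), ((j : ℕ) + 1) * (Fin.snoc g v : Fin (N + 1) → ℕ) j
      = (∑ j : Fin N, ((j : ℕ) + 1) * g j) + (N + 1) * v := by
  rw [sum_split]
  simp

lemma sum_update (N : ℕ) (g : Fin (N + 1) → ℕ) (v : ℕ) :
    ∑ j : Fin (N + 1), ((j : ℕ) + 1) * (Function.update g (Fin.last N) v) j
      = (∑ j : Fin N, ((j : ℕ) + 1) * g j.castSucc) + (N + 1) * v := by
  rw [sum_split]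
  congr 1
  · refine Finset.sum_congr rfl fun j _ => ?_
    rw [Function.update_of_ne (Fin.castSucc_lt_last j).ne]
  · rw [Function.update_self]

noncomputable def splitEquiv (N m : ℕ) :
    {g : Fin (N + 1) → ℕ // ∑ j : Fin (N + 1), ((j : ℕ) + 1) * g j = m}
      ≃ {g : Fin N → ℕ // ∑ j : Fin N, ((j : ℕ) + 1) * g j = m}
        ⊕ {g : Fin (N + 1) → ℕ // (∑ j : Fin (N + 1), ((j : ℕ) + 1) * g j) + (N + 1) = m} where
  toFun p :=
    if h : p.1 (Fin.last N) = 0 then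
      Sum.inl ⟨Fin.init p.1, by
        have hp := p.2
        rw [sum_split] at hp
        rw [h, Nat.mul_zero, add_zero] at hp
        exact hp⟩
    else
      Sum.inr ⟨Function.update p.1 (Fin.last N) (p.1 (Fin.last N) - 1), by
        have hp := p.2
        rw [sum_split] at hp
        rw [sum_update]
        obtain ⟨y, hy⟩ : ∃ y, p.1 (Fin.last N) = y + 1 := ⟨p.1 (Fin.last N) - 1, by omega⟩
        rw [hy] at hp ⊢
        have e1 : (N + 1) * (y + 1 - 1) = (N + 1) * y := by
          rw [Nat.add_sub_cancel]
        have e2 : (N + 1) * (y + 1) = (N + 1) * y + (N + 1) := by ring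
        omega⟩
  invFun q :=
    match q with
    | Sum.inl g => ⟨Fin.snoc g.1 0, by rw [sum_snoc]; simpa using g.2⟩
    | Sum.inr g => ⟨Function.update g.1 (Fin.last N) (g.1 (Fin.last N) + 1), by
        rw [sum_update]
        have hg := g.2
        rw [sum_split] at hg
        have e2 : (N + 1) * (g.1 (Fin.last N) + 1) = (N + 1) * g.1 (Fin.last N) + (N + 1) := by
          ring
        omega⟩
  left_inv p := by
    by_cases h : p.1 (Fin.last N) = 0
    · simp only [dif_pos h]
      apply Subtype.ext
      show Fin.snoc (Fin.init p.1) 0 = p.1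
      rw [← h, Fin.snoc_init_self]
    · simp only [dif_neg h]
      apply Subtype.ext
      show Function.update _ (Fin.last N)
        ((Function.update p.1 (Fin.last N) (p.1 (Fin.last N) - 1)) (Fin.last N) + 1) = p.1
      rw [Function.update_self, Function.update_idem,
        show p.1 (Fin.last N) - 1 + 1 = p.1 (Fin.last N) by omega, Function.update_eq_self]
  right_inv q := by
    cases q with
    | inl g =>
      have hlast : (Fin.snoc g.1 0 : Fin (N + 1) → ℕ) (Fin.last N) = 0 := by simp
      simp only [dif_pos hlast]
      congr 1
      apply Subtype.ext
      simp
    | inr g =>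
      have hlast : (Function.update g.1 (Fin.last N) (g.1 (Fin.last N) + 1)) (Fin.last N)
          = g.1 (Fin.last N) + 1 := by simp
      have hne : (Function.update g.1 (Fin.last N) (g.1 (Fin.last N) + 1)) (Fin.last N) ≠ 0 := by
        rw [hlast]; omega
      simp only [dif_neg hne]
      congr 1
      apply Subtype.ext
      show Function.update _ (Fin.last N) _ = g.1
      rw [hlast, Function.update_idem, Nat.add_sub_cancel, Function.update_eq_self]

lemma wcount_succ (N m : ℕ) :
    wcount (N + 1) m
      = wcount N m + (if N + 1 ≤ m then wcount (N + 1) (m - (N + 1)) else 0) := by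
  have h1 : wcount (N + 1) m = wcount N m
      + Nat.card {g : Fin (N + 1) → ℕ //
          (∑ j : Fin (N + 1), ((j : ℕ) + 1) * g j) + (N + 1) = m} := by
    unfold wcount
    rw [Nat.card_congr (splitEquiv N m), Nat.card_sum]
  rw [h1]
  congr 1
  by_cases h : N + 1 ≤ m
  · rw [if_pos h]
    unfold wcount
    apply Nat.card_congr
    apply Equiv.subtypeEquivRight
    intro g
    clear h1
    omega
  · rw [if_neg h]
    have : IsEmpty {g : Fin (N + 1) → ℕ //
        (∑ j : Fin (N + 1), ((j : ℕ) + 1) * g j) + (N + 1) = m} := by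
      constructor
      intro p
      have hp := p.2
      clear h1
      omega
    exact Nat.card_of_isEmpty


noncomputable def Qs (N : ℕ) : PowerSeries ℚ := PowerSeries.mk fun m => (wcount N m : ℚ)

lemma Qs_zero : Qs 0 = 1 := by
  ext m
  rw [Qs, coeff_mk, PowerSeries.coeff_one]
  cases m with
  | zero =>
    rw [if_pos rfl]
    unfold wcount
    haveI : Unique {g : Fin 0 → ℕ // ∑ j : Fin 0, ((j : ℕ) + 1) * g j = 0} :=
      ⟨⟨⟨fun j => j.elim0, by simp⟩⟩, fun a => Subtype.ext (funext fun j => j.elim0)⟩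
    rw [Nat.card_unique]
    norm_num
  | succ k =>
    rw [if_neg (by omega)]
    unfold wcount
    haveI : IsEmpty {g : Fin 0 → ℕ // ∑ j : Fin 0, ((j : ℕ) + 1) * g j = k + 1} := by
      constructor
      intro p
      have hp := p.2
      simp at hp
    rw [Nat.card_of_isEmpty]
    norm_num

lemma Qs_rec (N : ℕ) : Qs (N + 1) = Qs N + X ^ (N + 1) * Qs (N + 1) := by
  ext m
  rw [map_add, mul_comm (X ^ (N + 1) : PowerSeries ℚ), PowerSeries.coeff_mul_X_pow']
  simp only [Qs, coeff_mk]
  rw [wcount_succ N m]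
  push_cast
  split_ifs <;> simp

lemma Qs_mul_prod (N : ℕ) :
    Qs N * ∏ j ∈ Finset.range N, (1 - (X : PowerSeries ℚ) ^ (j + 1)) = 1 := by
  induction N with
  | zero => simp [Qs_zero]
  | succ N ih =>
    have key : Qs (N + 1) * (1 - (X : PowerSeries ℚ) ^ (N + 1)) = Qs N := by
      linear_combination Qs_rec N
    calc Qs (N + 1) * ∏ j ∈ Finset.range (N + 1), (1 - (X : PowerSeries ℚ) ^ (j + 1))
        = (Qs (N + 1) * (1 - (X : PowerSeries ℚ) ^ (N + 1)))
            * ∏ j ∈ Finset.range N, (1 - (X : PowerSeries ℚ) ^ (j + 1)) := by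
          rw [Finset.prod_range_succ]; ring
      _ = Qs N * ∏ j ∈ Finset.range N, (1 - (X : PowerSeries ℚ) ^ (j + 1)) := by rw [key]
      _ = 1 := ih

lemma sumrev (s : ℕ) (h : Fin (2 * s) → ℕ) :
    ∑ j : Fin (2 * s), ((j : ℕ) + 1) * h (Fin.rev j)
      = ∑ i : Fin (2 * s), (2 * s - (i : ℕ)) * h i := by
  refine Fintype.sum_bijective Fin.rev (Fin.rev_involutive.bijective) _ _ (fun j => ?_)
  have e : ((j : ℕ) + 1) = 2 * s - ((Fin.rev j : Fin (2 * s)) : ℕ) := by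
    rw [Fin.val_rev]
    have := j.isLt
    omega
  rw [e]

noncomputable def revEquiv (s n c : ℕ) :
    {g : Fin (2 * s) → ℕ // (∑ m : Fin (2 * s), (2 * s - (m : ℕ)) * g m) + c = n}
      ≃ {g : Fin (2 * s) → ℕ // (∑ j : Fin (2 * s), ((j : ℕ) + 1) * g j) + c = n} where
  toFun p := ⟨p.1 ∘ Fin.rev, by
    have hr := sumrev s p.1
    have hp := p.2
    show (∑ j : Fin (2 * s), ((j : ℕ) + 1) * p.1 (Fin.rev j)) + c = n
    omega⟩
  invFun q := ⟨q.1 ∘ Fin.rev, by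
    have hr := sumrev s (q.1 ∘ Fin.rev)
    have hq := q.2
    simp only [Function.comp_apply, Fin.rev_rev] at hr
    show (∑ m : Fin (2 * s), (2 * s - (m : ℕ)) * q.1 (Fin.rev m)) + c = n
    omega⟩
  left_inv p := by
    apply Subtype.ext
    funext k
    show p.1 (Fin.rev (Fin.rev k)) = p.1 k
    rw [Fin.rev_rev]
  right_inv q := by
    apply Subtype.ext
    funext k
    show q.1 (Fin.rev (Fin.rev k)) = q.1 k
    rw [Fin.rev_rev]

noncomputable def mainEquiv (s n : ℕ) :
    {f : Fin (2 * s) → ℕ //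
        (∀ i, 0 < f i) ∧
        (∀ l : Fin s, f ⟨2 * (l : ℕ), by have := l.isLt; linarith⟩ <
            f ⟨2 * (l : ℕ) + 1, by have := l.isLt; linarith⟩) ∧
        (∀ l : Fin s, ∀ h : 2 * (l : ℕ) + 2 < 2 * s,
            f ⟨2 * (l : ℕ) + 1, by linarith⟩ ≤ f ⟨2 * (l : ℕ) + 2, h⟩) ∧
        ∑ i, f i = n}
      ≃ {g : Fin (2 * s) → ℕ //
          (∑ m : Fin (2 * s), (2 * s - (m : ℕ)) * g m) + s * (s + 2) = n} where
  toFun p := ⟨diffE (2 * s) p.1, by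
    obtain ⟨hpos, h2, h3, hsum⟩ := p.2
    have hb := buildF_diffE s p.1 hpos h2 h3
    have hS := sum_buildF (2 * s) (diffE (2 * s) p.1)
    rw [hb, sum_stair] at hS
    omega⟩
  invFun g := ⟨buildF (2 * s) g.1, by
    refine ⟨fun i => buildF_pos _ _ _, fun l => ?_, fun l h => ?_, ?_⟩
    · have hb := buildF_succ (2 * s) g.1 (2 * (l : ℕ)) (by have := l.isLt; omega)
      omega
    · have hb := buildF_succ (2 * s) g.1 (2 * (l : ℕ) + 1) (by omega)
      have e : buildF (2 * s) g.1 ⟨2 * (l : ℕ) + 1 + 1, by omega⟩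
          = buildF (2 * s) g.1 ⟨2 * (l : ℕ) + 2, h⟩ :=
        congrArg _ (Fin.ext (by simp only [Fin.val_mk]))
      rw [e] at hb
      omega
    · rw [sum_buildF, sum_stair]
      have := g.2
      omega⟩
  left_inv p := Subtype.ext (buildF_diffE s p.1 p.2.1 p.2.2.1 p.2.2.2.1)
  right_inv g := Subtype.ext (diffE_buildF (2 * s) g.1)

lemma card_S (s n : ℕ) :
    Nat.card {f : Fin (2 * s) → ℕ //
        (∀ i, 0 < f i) ∧
        (∀ l : Fin s, f ⟨2 * (l : ℕ), by have := l.isLt; linarith⟩ <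
            f ⟨2 * (l : ℕ) + 1, by have := l.isLt; linarith⟩) ∧
        (∀ l : Fin s, ∀ h : 2 * (l : ℕ) + 2 < 2 * s,
            f ⟨2 * (l : ℕ) + 1, by linarith⟩ ≤ f ⟨2 * (l : ℕ) + 2, h⟩) ∧
        ∑ i, f i = n}
      = if s * (s + 2) ≤ n then wcount (2 * s) (n - s * (s + 2)) else 0 := by
  rw [Nat.card_congr (mainEquiv s n), Nat.card_congr (revEquiv s n (s * (s + 2)))]
  by_cases h : s * (s + 2) ≤ n
  · rw [if_pos h]
    unfold wcount
    apply Nat.card_congr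
    apply Equiv.subtypeEquivRight
    intro g
    omega
  · rw [if_neg h]
    have : IsEmpty {g : Fin (2 * s) → ℕ //
        (∑ j : Fin (2 * s), ((j : ℕ) + 1) * g j) + s * (s + 2) = n} := by
      constructor
      intro p
      have hp := p.2
      omega
    exact Nat.card_of_isEmpty

end AltGF

open AltGF in
/-- For `s ≥ 1`, the generating function (by total sum) of sequences
`1 ≤ i₁ < i₂ ≤ i₃ < i₄ ≤ ⋯ ≤ i_{2s-1} < i_{2s}` of positive integers equals
`x^{s(s+2)} / ∏_{j=1}^{2s} (1 - x^j)` in `ℚ[[x]]`. -/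
theorem alt_strict_weak_gf (s : ℕ) (hs : 1 ≤ s) :
    (PowerSeries.mk fun n =>
        (Nat.card {f : Fin (2 * s) → ℕ //
            (∀ i, 0 < f i) ∧
            (∀ l : Fin s, f ⟨2 * (l : ℕ), by have := l.isLt; omega⟩ <
                f ⟨2 * (l : ℕ) + 1, by have := l.isLt; omega⟩) ∧
            (∀ l : Fin s, ∀ h : 2 * (l : ℕ) + 2 < 2 * s,
                f ⟨2 * (l : ℕ) + 1, by omega⟩ ≤ f ⟨2 * (l : ℕ) + 2, h⟩) ∧
            ∑ i, f i = n} : ℚ)) *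
      ∏ j ∈ Finset.range (2 * s), (1 - (X : PowerSeries ℚ) ^ (j + 1)) =
      (X : PowerSeries ℚ) ^ (s * (s + 2)) := by
  have key : (PowerSeries.mk fun n =>
        (Nat.card {f : Fin (2 * s) → ℕ //
            (∀ i, 0 < f i) ∧
            (∀ l : Fin s, f ⟨2 * (l : ℕ), by have := l.isLt; omega⟩ <
                f ⟨2 * (l : ℕ) + 1, by have := l.isLt; omega⟩) ∧
            (∀ l : Fin s, ∀ h : 2 * (l : ℕ) + 2 < 2 * s,
                f ⟨2 * (l : ℕ) + 1, by omega⟩ ≤ f ⟨2 * (l : ℕ) + 2, h⟩) ∧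
            ∑ i, f i = n} : ℚ))
      = (X : PowerSeries ℚ) ^ (s * (s + 2)) * Qs (2 * s) := by
    ext n
    rw [coeff_mk, mul_comm ((X : PowerSeries ℚ) ^ (s * (s + 2))) (Qs (2 * s)),
      PowerSeries.coeff_mul_X_pow', card_S s n]
    split_ifs with h
    · rw [Qs, coeff_mk]
    · simp
  rw [key, mul_assoc, Qs_mul_prod, mul_one]
end

section
/- For every s ≥ 0, the sum Σ x^{i₁+…+i_{2s+1}} over all sequences of positive integers with 1 ≤ i₁ ≤ i₂ < i₃ ≤ i₄ < … ≤ i_{2s} < i_{2s+1} (alternating weak and strict inequalities, starting weak) equals x^{(s+1)²} / ∏_{j=1}^{2s+1}(1 - x^j) as formal power series. -/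
open PowerSeries

lemma sum_halves (s : ℕ) : ∑ i ∈ Finset.range (2 * s + 1), ((i : ℕ) / 2 + 1) = (s + 1) ^ 2 := by
  induction s with
  | zero => simp
  | succ t ih =>
    have h : 2 * (t + 1) + 1 = (2 * t + 1) + 1 + 1 := by ring
    rw [h, Finset.sum_range_succ, Finset.sum_range_succ, ih]
    have e1 : (2 * t + 1) / 2 = t := by omega
    have e2 : (2 * t + 1 + 1) / 2 = t + 1 := by omega
    rw [e1, e2]
    ring

lemma double_sum (N : ℕ) (h : ℕ → ℕ) :
    ∑ i ∈ Finset.range N, ∑ j ∈ Finset.range (i + 1), h j =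
      ∑ j ∈ Finset.range N, (N - j) * h j := by
  induction N with
  | zero => simp
  | succ t ih =>
    have hc : ∀ j ∈ Finset.range t, (t + 1 - j) * h j = (t - j) * h j + h j := by
      intro j hj
      rw [Finset.mem_range] at hj
      have e : t + 1 - j = (t - j) + 1 := by omega
      rw [e]; ring
    rw [Finset.sum_range_succ, ih, Finset.sum_range_succ,
      Finset.sum_range_succ (fun j => (t + 1 - j) * h j), Finset.sum_congr rfl hc,
      Finset.sum_add_distrib]
    have e2 : (t + 1 - t) * h t = h t := by
      have e : t + 1 - t = 1 := by omega
      rw [e, one_mul]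
    rw [e2]
    ring

def exf (s : ℕ) (g : Fin (2 * s + 1) → ℕ) (j : ℕ) : ℕ :=
  if h : j < 2 * s + 1 then g ⟨j, h⟩ else 0

def Phi (s : ℕ) (g : Fin (2 * s + 1) → ℕ) : Fin (2 * s + 1) → ℕ :=
  fun i => (i : ℕ) / 2 + 1 + ∑ j ∈ Finset.range ((i : ℕ) + 1), exf s g j

def Dm (s : ℕ) (f : Fin (2 * s + 1) → ℕ) : Fin (2 * s + 1) → ℕ :=
  fun j => if (j : ℕ) = 0 then f j - 1
    else f j - exf s f ((j : ℕ) - 1) - ((j : ℕ) + 1) % 2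

lemma exf_val (s : ℕ) (g : Fin (2 * s + 1) → ℕ) (j : ℕ) (hj : j < 2 * s + 1) :
    exf s g j = g ⟨j, hj⟩ := dif_pos hj

lemma Phi_val (s : ℕ) (g : Fin (2 * s + 1) → ℕ) (a : ℕ) (ha : a < 2 * s + 1) :
    Phi s g ⟨a, ha⟩ = a / 2 + 1 + ∑ j ∈ Finset.range (a + 1), exf s g j := rfl

lemma Dm_val_zero (s : ℕ) (f : Fin (2 * s + 1) → ℕ) (ha : 0 < 2 * s + 1) :
    Dm s f ⟨0, ha⟩ = f ⟨0, ha⟩ - 1 := rfl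

lemma Dm_val_succ (s : ℕ) (f : Fin (2 * s + 1) → ℕ) (t : ℕ) (ha : t + 1 < 2 * s + 1) :
    Dm s f ⟨t + 1, ha⟩ = f ⟨t + 1, ha⟩ - exf s f t - (t + 2) % 2 := by
  show (if (t + 1 : ℕ) = 0 then _ else _) = _
  rw [if_neg (Nat.succ_ne_zero t)]
  simp only [Nat.add_sub_cancel]

section Main
variable (s : ℕ) (f : Fin (2 * s + 1) → ℕ)

lemma step_ineq
    (h2 : ∀ l : Fin s, f ⟨2 * (l : ℕ), by have := l.isLt; linarith⟩ ≤
        f ⟨2 * (l : ℕ) + 1, by have := l.isLt; linarith⟩)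
    (h3 : ∀ l : Fin s, f ⟨2 * (l : ℕ) + 1, by have := l.isLt; linarith⟩ <
        f ⟨2 * (l : ℕ) + 2, by have := l.isLt; linarith⟩) :
    ∀ j, 0 < j → ∀ hj : j < 2 * s + 1, exf s f (j - 1) + (j + 1) % 2 ≤ f ⟨j, hj⟩ := by
  have h2' : ∀ l (hl : l < s), f ⟨2 * l, by omega⟩ ≤ f ⟨2 * l + 1, by omega⟩ :=
    fun l hl => h2 ⟨l, hl⟩
  have h3' : ∀ l (hl : l < s), f ⟨2 * l + 1, by omega⟩ < f ⟨2 * l + 2, by omega⟩ :=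
    fun l hl => h3 ⟨l, hl⟩
  have fext : ∀ (a b : ℕ) (ha : a < 2 * s + 1) (hb : b < 2 * s + 1), a = b →
      f ⟨a, ha⟩ = f ⟨b, hb⟩ := by rintro a b ha hb rfl; rfl
  intro j hj0 hjN
  rcases Nat.even_or_odd j with he | ho
  · obtain ⟨l, rfl⟩ : ∃ l, j = 2 * l + 2 := by
      obtain ⟨l, hl⟩ := he
      exact ⟨l - 1, by omega⟩
    have hl : l < s := by omega
    rw [exf_val s f (2 * l + 2 - 1) (by omega),
      fext (2 * l + 2 - 1) (2 * l + 1) (by omega) (by omega) (by omega),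
      show (2 * l + 2 + 1) % 2 = 1 by omega,
      fext (2 * l + 2) (2 * l + 2) hjN (by omega) rfl]
    have := h3' l hl
    omega
  · obtain ⟨l, rfl⟩ : ∃ l, j = 2 * l + 1 := by
      obtain ⟨l, hl⟩ := ho
      exact ⟨l, by omega⟩
    have hl : l < s := by omega
    rw [exf_val s f (2 * l + 1 - 1) (by omega),
      fext (2 * l + 1 - 1) (2 * l) (by omega) (by omega) (by omega),
      show (2 * l + 1 + 1) % 2 = 0 by omega,
      fext (2 * l + 1) (2 * l + 1) hjN (by omega) rfl]
    have := h2' l hl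
    omega

lemma recon (h1 : ∀ i, 0 < f i)
    (hstep : ∀ j, 0 < j → ∀ hj : j < 2 * s + 1,
      exf s f (j - 1) + (j + 1) % 2 ≤ f ⟨j, hj⟩) :
    ∀ i (hi : i < 2 * s + 1),
      f ⟨i, hi⟩ = i / 2 + 1 + ∑ j ∈ Finset.range (i + 1), exf s (Dm s f) j := by
  intro i
  induction i with
  | zero =>
    intro hi
    rw [Finset.sum_range_one, exf_val s (Dm s f) 0 hi, Dm_val_zero s f hi]
    have := h1 ⟨0, hi⟩
    omega
  | succ t ih =>
    intro hi
    have ht : t < 2 * s + 1 := by omega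
    have iht := ih ht
    rw [Finset.sum_range_succ, exf_val s (Dm s f) (t + 1) hi, Dm_val_succ s f t hi,
      exf_val s f t ht]
    have hstep' := hstep (t + 1) (by omega) hi
    rw [show t + 1 - 1 = t by omega, exf_val s f t ht] at hstep'
    omega

lemma Phi_D (h1 : ∀ i, 0 < f i)
    (h2 : ∀ l : Fin s, f ⟨2 * (l : ℕ), by have := l.isLt; linarith⟩ ≤
        f ⟨2 * (l : ℕ) + 1, by have := l.isLt; linarith⟩)
    (h3 : ∀ l : Fin s, f ⟨2 * (l : ℕ) + 1, by have := l.isLt; linarith⟩ <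
        f ⟨2 * (l : ℕ) + 2, by have := l.isLt; linarith⟩) :
    Phi s (Dm s f) = f := by
  funext i
  obtain ⟨a, ha⟩ := i
  rw [Phi_val]
  exact (recon s f h1 (step_ineq s f h2 h3) a ha).symm

lemma D_Phi (g : Fin (2 * s + 1) → ℕ) : Dm s (Phi s g) = g := by
  funext j
  obtain ⟨a, ha⟩ := j
  rcases a with _ | t
  · rw [Dm_val_zero s _ ha, Phi_val, Finset.sum_range_one, exf_val s g 0 ha]
    omega
  · rw [Dm_val_succ s _ t ha, Phi_val, exf_val s (Phi s g) t (by omega), Phi_val,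
      Finset.sum_range_succ, exf_val s g (t + 1) ha]
    have e : (t + 1) / 2 = t / 2 + (t + 2) % 2 := by omega
    omega

lemma sum_Phi (g : Fin (2 * s + 1) → ℕ) :
    ∑ i, Phi s g i = (s + 1) ^ 2 + ∑ j : Fin (2 * s + 1), (2 * s + 1 - (j : ℕ)) * g j := by
  have h0 : ∑ i, Phi s g i =
      ∑ i ∈ Finset.range (2 * s + 1), (i / 2 + 1 + ∑ j ∈ Finset.range (i + 1), exf s g j) :=
    Fin.sum_univ_eq_sum_range (fun i => i / 2 + 1 + ∑ j ∈ Finset.range (i + 1), exf s g j) _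
  rw [h0, Finset.sum_add_distrib, sum_halves s, double_sum (2 * s + 1) (exf s g)]
  congr 1
  rw [← Fin.sum_univ_eq_sum_range (fun j => (2 * s + 1 - j) * exf s g j) (2 * s + 1)]
  apply Finset.sum_congr rfl
  intro j _
  rw [exf_val s g (j : ℕ) j.isLt]

lemma Phi_pos (g : Fin (2 * s + 1) → ℕ) : ∀ i, 0 < Phi s g i := by
  intro i
  obtain ⟨a, ha⟩ := i
  rw [Phi_val]
  omega

lemma Phi_weak (g : Fin (2 * s + 1) → ℕ) (l : Fin s) :
    Phi s g ⟨2 * (l : ℕ), by have := l.isLt; linarith⟩ ≤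
      Phi s g ⟨2 * (l : ℕ) + 1, by have := l.isLt; linarith⟩ := by
  rw [Phi_val, Phi_val]
  have hmono : ∑ j ∈ Finset.range (2 * (l : ℕ) + 1), exf s g j ≤
      ∑ j ∈ Finset.range (2 * (l : ℕ) + 1 + 1), exf s g j :=
    Finset.sum_le_sum_of_subset (Finset.range_subset_range.2 (by omega))
  have e : (2 * (l : ℕ)) / 2 = (2 * (l : ℕ) + 1) / 2 := by omega
  omega

lemma Phi_strict (g : Fin (2 * s + 1) → ℕ) (l : Fin s) :
    Phi s g ⟨2 * (l : ℕ) + 1, by have := l.isLt; linarith⟩ <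
      Phi s g ⟨2 * (l : ℕ) + 2, by have := l.isLt; linarith⟩ := by
  rw [Phi_val, Phi_val]
  have hmono : ∑ j ∈ Finset.range (2 * (l : ℕ) + 1 + 1), exf s g j ≤
      ∑ j ∈ Finset.range (2 * (l : ℕ) + 2 + 1), exf s g j :=
    Finset.sum_le_sum_of_subset (Finset.range_subset_range.2 (by omega))
  have e : (2 * (l : ℕ) + 1) / 2 + 1 = (2 * (l : ℕ) + 2) / 2 := by omega
  omega

lemma card_A (n : ℕ) :
    Nat.card {f : Fin (2 * s + 1) → ℕ //
        (∀ i, 0 < f i) ∧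
        (∀ l : Fin s, f ⟨2 * (l : ℕ), by have := l.isLt; linarith⟩ ≤
            f ⟨2 * (l : ℕ) + 1, by have := l.isLt; linarith⟩) ∧
        (∀ l : Fin s, f ⟨2 * (l : ℕ) + 1, by have := l.isLt; linarith⟩ <
            f ⟨2 * (l : ℕ) + 2, by have := l.isLt; linarith⟩) ∧
        ∑ i, f i = n} =
      Nat.card {g : Fin (2 * s + 1) → ℕ //
        (s + 1) ^ 2 + ∑ j : Fin (2 * s + 1), (2 * s + 1 - (j : ℕ)) * g j = n} := by
  apply Nat.card_congr
  refine ⟨fun f => ⟨Dm s f.1, ?_⟩, fun g => ⟨Phi s g.1,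
    ⟨Phi_pos s g.1, Phi_weak s g.1, Phi_strict s g.1, ?_⟩⟩, ?_, ?_⟩
  · obtain ⟨f, hf1, hf2, hf3, hfsum⟩ := f
    have := sum_Phi s (Dm s f)
    rw [Phi_D s f hf1 hf2 hf3] at this
    rw [← this, hfsum]
  · rw [sum_Phi s g.1, g.2]
  · rintro ⟨f, hf1, hf2, hf3, hfsum⟩
    exact Subtype.ext (Phi_D s f hf1 hf2 hf3)
  · rintro ⟨g, hg⟩
    exact Subtype.ext (D_Phi s g)

end Main


lemma finite_sol (k : ℕ) (c : Fin k → ℕ) (hc : ∀ i, 0 < c i) (m : ℕ) :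
    Finite {g : Fin k → ℕ // ∑ i, c i * g i = m} := by
  have key : ∀ (g : {g : Fin k → ℕ // ∑ i, c i * g i = m}) (i : Fin k), g.1 i < m + 1 := by
    rintro ⟨g, hg⟩ i
    show g i < m + 1
    have h1 : c i * g i ≤ m := hg ▸ Finset.single_le_sum (f := fun i => c i * g i)
      (fun j _ => Nat.zero_le _) (Finset.mem_univ i)
    have h2 : g i ≤ c i * g i := Nat.le_mul_of_pos_left _ (hc i)
    omega
  apply Finite.of_injective (f := fun g : {g : Fin k → ℕ // ∑ i, c i * g i = m} =>
    (fun i => (⟨g.1 i, key g i⟩ : Fin (m + 1))))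
  rintro ⟨g, hg⟩ ⟨g', hg'⟩ h
  ext i
  exact congrArg Fin.val (congrFun h i)

lemma card_rec (k : ℕ) (c : Fin (k + 1) → ℕ) (hc : ∀ i, 0 < c i) (m : ℕ) :
    Nat.card {g : Fin (k + 1) → ℕ // ∑ i, c i * g i = m} =
      Nat.card {g : Fin k → ℕ // ∑ i, c (Fin.castSucc i) * g i = m} +
      (if c (Fin.last k) ≤ m then
        Nat.card {g : Fin (k + 1) → ℕ // ∑ i, c i * g i = m - c (Fin.last k)} else 0) := by
  have hfin := finite_sol (k + 1) c hc
  have hfin' := finite_sol k (fun i => c (Fin.castSucc i)) (fun i => hc _)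
  by_cases hm : c (Fin.last k) ≤ m
  · rw [if_pos hm]
    have e : {g : Fin (k + 1) → ℕ // ∑ i, c i * g i = m} ≃
        {g : Fin k → ℕ // ∑ i, c (Fin.castSucc i) * g i = m} ⊕
        {g : Fin (k + 1) → ℕ // ∑ i, c i * g i = m - c (Fin.last k)} := by
      apply Equiv.ofBijective (f := fun g =>
        if h : g.1 (Fin.last k) = 0 then
          Sum.inl ⟨fun i => g.1 (Fin.castSucc i), by
            have := g.2
            rw [Fin.sum_univ_castSucc] at this
            simp [h] at this
            exact this⟩
        else
          Sum.inr ⟨Function.update g.1 (Fin.last k) (g.1 (Fin.last k) - 1), by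
            have hs := g.2
            rw [Fin.sum_univ_castSucc] at hs ⊢
            have hb : c (Fin.last k) ≤ c (Fin.last k) * g.1 (Fin.last k) :=
              Nat.le_mul_of_pos_right _ (Nat.pos_of_ne_zero h)
            rw [Finset.sum_congr rfl (fun i _ => by
              rw [Function.update_of_ne (Fin.castSucc_lt_last i).ne _ _])]
            rw [Function.update_self]
            have : c (Fin.last k) * (g.1 (Fin.last k) - 1) =
                c (Fin.last k) * g.1 (Fin.last k) - c (Fin.last k) := by
              rw [Nat.mul_sub, mul_one]
            omega⟩)
      constructor
      · rintro ⟨g, hg⟩ ⟨g', hg'⟩ h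
        by_cases h1 : g (Fin.last k) = 0 <;> by_cases h2 : g' (Fin.last k) = 0 <;>
          simp only [dif_pos, dif_neg, h1, h2, dite_true, not_false_iff, dite_false,
            Sum.inl.injEq, Sum.inr.injEq, Subtype.mk.injEq, reduceCtorEq] at h
        · apply Subtype.ext; funext i
          refine Fin.lastCases ?_ (fun j => ?_) i
          · show g _ = g' _; rw [h1, h2]
          · exact congrFun h j
        · apply Subtype.ext; funext i
          refine Fin.lastCases ?_ (fun j => ?_) i
          · show g _ = g' _
            have := congrFun h (Fin.last k)
            simp only [Function.update_self] at this
            omega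
          · show g _ = g' _
            have := congrFun h (Fin.castSucc j)
            simpa [Function.update_of_ne (Fin.castSucc_lt_last j).ne] using this
      · rintro (⟨g, hg⟩ | ⟨g, hg⟩)
        · refine ⟨⟨Fin.snoc g 0, ?_⟩, ?_⟩
          · rw [Fin.sum_univ_castSucc]
            simp [Fin.snoc_castSucc, Fin.snoc_last, hg]
          · have h0 : (Fin.snoc g 0 : Fin (k + 1) → ℕ) (Fin.last k) = 0 := Fin.snoc_last _ _
            show (if h : (Fin.snoc g 0 : Fin (k + 1) → ℕ) (Fin.last k) = 0 then _ else _) = _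
            rw [dif_pos h0]
            refine congrArg Sum.inl (Subtype.ext ?_)
            funext j
            simp
        · refine ⟨⟨Function.update g (Fin.last k) (g (Fin.last k) + 1), ?_⟩, ?_⟩
          · rw [Fin.sum_univ_castSucc] at hg ⊢
            rw [Finset.sum_congr rfl (fun i _ => by
              rw [Function.update_of_ne (Fin.castSucc_lt_last i).ne _ _])]
            rw [Function.update_self, Nat.mul_add, mul_one]
            omega
          · have h0 : Function.update g (Fin.last k) (g (Fin.last k) + 1) (Fin.last k) ≠ 0 := by
              simp [Function.update_self]
            show (if h : Function.update g (Fin.last k) (g (Fin.last k) + 1) (Fin.last k) = 0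
                then _ else _) = _
            rw [dif_neg h0]
            refine congrArg Sum.inr (Subtype.ext ?_)
            funext i
            refine Fin.lastCases ?_ (fun j => ?_) i
            · simp [Function.update_self]
            · simp [Function.update_of_ne (Fin.castSucc_lt_last j).ne]
    haveI := hfin m
    haveI := hfin (m - c (Fin.last k))
    haveI : Finite {g : Fin k → ℕ // ∑ i, c (Fin.castSucc i) * g i = m} := hfin' m
    rw [Nat.card_congr e, Nat.card_sum]
  · have e : {g : Fin (k + 1) → ℕ // ∑ i, c i * g i = m} ≃
        {g : Fin k → ℕ // ∑ i, c (Fin.castSucc i) * g i = m} := by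
      have hlast : ∀ g : {g : Fin (k + 1) → ℕ // ∑ i, c i * g i = m},
          g.1 (Fin.last k) = 0 := by
        rintro ⟨g, hg⟩
        show g (Fin.last k) = 0
        by_contra h0
        have : c (Fin.last k) ≤ ∑ i, c i * g i := by
          calc c (Fin.last k) ≤ c (Fin.last k) * g (Fin.last k) :=
            Nat.le_mul_of_pos_right _ (Nat.pos_of_ne_zero h0)
          _ ≤ _ := Finset.single_le_sum (f := fun i => c i * g i)
            (fun j _ => Nat.zero_le _) (Finset.mem_univ _)
        omega
      refine ⟨fun g => ⟨fun i => g.1 (Fin.castSucc i), ?_⟩,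
        fun g => ⟨Fin.snoc g.1 0, ?_⟩, ?_, ?_⟩
      · have := g.2
        rw [Fin.sum_univ_castSucc, hlast g] at this
        simpa using this
      · rw [Fin.sum_univ_castSucc]
        simpa [Fin.snoc_castSucc, Fin.snoc_last] using g.2
      · rintro ⟨g, hg⟩
        apply Subtype.ext; funext i
        refine Fin.lastCases ?_ (fun j => ?_) i
        · show (Fin.snoc (fun i => g (Fin.castSucc i)) 0 : Fin (k + 1) → ℕ) (Fin.last k) = g _
          rw [Fin.snoc_last]
          exact (hlast ⟨g, hg⟩).symm
        · show (Fin.snoc (fun i => g (Fin.castSucc i)) 0 : Fin (k + 1) → ℕ) (Fin.castSucc j) = g _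
          rw [Fin.snoc_castSucc]
      · rintro ⟨g, hg⟩
        apply Subtype.ext; funext i
        show (Fin.snoc g 0 : Fin (k + 1) → ℕ) (Fin.castSucc i) = g i
        rw [Fin.snoc_castSucc]
    rw [if_neg hm]
    rw [Nat.card_congr e]
    simp

lemma gfB : ∀ (k : ℕ) (c : Fin k → ℕ), (∀ i, 0 < c i) →
    (PowerSeries.mk fun m => (Nat.card {g : Fin k → ℕ // ∑ i, c i * g i = m} : ℚ)) *
      ∏ i, (1 - (X : PowerSeries ℚ) ^ c i) = 1 := by
  intro k
  induction k with
  | zero =>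
    intro c hc
    rw [Fin.prod_univ_zero, mul_one]
    ext n
    rw [coeff_mk, coeff_one]
    rcases n with _ | n
    · rw [if_pos rfl]
      have : Nat.card {g : Fin 0 → ℕ // ∑ i, c i * g i = 0} = 1 := by
        rw [Nat.card_eq_one_iff_unique]
        constructor
        · constructor
          rintro ⟨g, _⟩ ⟨g', _⟩
          apply Subtype.ext; funext i; exact i.elim0
        · exact ⟨⟨fun i => i.elim0, by simp⟩⟩
      rw [this]; norm_num
    · rw [if_neg (Nat.succ_ne_zero n)]
      have : IsEmpty {g : Fin 0 → ℕ // ∑ i, c i * g i = n + 1} := by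
        constructor
        rintro ⟨g, hg⟩
        simp at hg
      rw [Nat.card_of_isEmpty]; norm_num
  | succ k ih =>
    intro c hc
    have key : (PowerSeries.mk fun m =>
          (Nat.card {g : Fin (k + 1) → ℕ // ∑ i, c i * g i = m} : ℚ)) *
        (1 - (X : PowerSeries ℚ) ^ c (Fin.last k)) =
        PowerSeries.mk fun m =>
          (Nat.card {g : Fin k → ℕ // ∑ i, c (Fin.castSucc i) * g i = m} : ℚ) := by
      ext n
      rw [mul_sub, mul_one, map_sub, coeff_mk, coeff_mul_X_pow', coeff_mk]
      have hrec := card_rec k c hc n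
      by_cases h : c (Fin.last k) ≤ n
      · rw [if_pos h, coeff_mk]
        rw [if_pos h] at hrec
        push_cast [hrec]
        ring
      · rw [if_neg h, coeff_mk]
        rw [if_neg h] at hrec
        push_cast [hrec]
        ring
    rw [Fin.prod_univ_castSucc, ← mul_assoc, mul_comm
      (PowerSeries.mk fun m => (Nat.card {g : Fin (k + 1) → ℕ // ∑ i, c i * g i = m} : ℚ))
      (∏ i : Fin k, (1 - (X : PowerSeries ℚ) ^ c (Fin.castSucc i))), mul_assoc, key,
      mul_comm]
    exact ih (fun i => c (Fin.castSucc i)) (fun i => hc _)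

/-- For `s ≥ 0`, the generating function (by total sum) of sequences
`1 ≤ i₁ ≤ i₂ < i₃ ≤ i₄ < ⋯ ≤ i_{2s} < i_{2s+1}` of positive integers equals
`x^{(s+1)²} / ∏_{j=1}^{2s+1} (1 - x^j)` in `ℚ[[x]]`. -/
theorem alt_weak_strict_gf (s : ℕ) :
    (PowerSeries.mk fun n =>
        (Nat.card {f : Fin (2 * s + 1) → ℕ //
            (∀ i, 0 < f i) ∧
            (∀ l : Fin s, f ⟨2 * (l : ℕ), by have := l.isLt; omega⟩ ≤
                f ⟨2 * (l : ℕ) + 1, by have := l.isLt; omega⟩) ∧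
            (∀ l : Fin s, f ⟨2 * (l : ℕ) + 1, by have := l.isLt; omega⟩ <
                f ⟨2 * (l : ℕ) + 2, by have := l.isLt; omega⟩) ∧
            ∑ i, f i = n} : ℚ)) *
      ∏ j ∈ Finset.range (2 * s + 1), (1 - (X : PowerSeries ℚ) ^ (j + 1)) =
      (X : PowerSeries ℚ) ^ ((s + 1) ^ 2) := by
  have hB : (PowerSeries.mk fun m =>
        (Nat.card {g : Fin (2 * s + 1) → ℕ //
          ∑ j : Fin (2 * s + 1), (2 * s + 1 - (j : ℕ)) * g j = m} : ℚ)) *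
      ∏ i : Fin (2 * s + 1), (1 - (X : PowerSeries ℚ) ^ (2 * s + 1 - (i : ℕ))) = 1 :=
    gfB (2 * s + 1) (fun j => 2 * s + 1 - (j : ℕ)) (fun i => Nat.sub_pos_of_lt i.isLt)
  have hprod : ∏ j ∈ Finset.range (2 * s + 1), (1 - (X : PowerSeries ℚ) ^ (j + 1)) =
      ∏ i : Fin (2 * s + 1), (1 - (X : PowerSeries ℚ) ^ (2 * s + 1 - (i : ℕ))) := by
    rw [Fin.prod_univ_eq_prod_range (fun j => 1 - (X : PowerSeries ℚ) ^ (2 * s + 1 - j))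
      (2 * s + 1),
      ← Finset.prod_range_reflect (fun j => 1 - (X : PowerSeries ℚ) ^ (j + 1)) (2 * s + 1)]
    apply Finset.prod_congr rfl
    intro j hj
    rw [Finset.mem_range] at hj
    rw [show 2 * s + 1 - 1 - j + 1 = 2 * s + 1 - j from by omega]
  have hmkA : (PowerSeries.mk fun n =>
        (Nat.card {f : Fin (2 * s + 1) → ℕ //
            (∀ i, 0 < f i) ∧
            (∀ l : Fin s, f ⟨2 * (l : ℕ), by have := l.isLt; omega⟩ ≤
                f ⟨2 * (l : ℕ) + 1, by have := l.isLt; omega⟩) ∧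
            (∀ l : Fin s, f ⟨2 * (l : ℕ) + 1, by have := l.isLt; omega⟩ <
                f ⟨2 * (l : ℕ) + 2, by have := l.isLt; omega⟩) ∧
            ∑ i, f i = n} : ℚ)) =
      (PowerSeries.mk fun m =>
        (Nat.card {g : Fin (2 * s + 1) → ℕ //
          ∑ j : Fin (2 * s + 1), (2 * s + 1 - (j : ℕ)) * g j = m} : ℚ)) *
      (X : PowerSeries ℚ) ^ ((s + 1) ^ 2) := by
    ext n
    rw [coeff_mk, coeff_mul_X_pow', card_A s n]
    by_cases h : (s + 1) ^ 2 ≤ n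
    · rw [if_pos h, coeff_mk]
      have e : {g : Fin (2 * s + 1) → ℕ //
            (s + 1) ^ 2 + ∑ j : Fin (2 * s + 1), (2 * s + 1 - (j : ℕ)) * g j = n} ≃
          {g : Fin (2 * s + 1) → ℕ //
            ∑ j : Fin (2 * s + 1), (2 * s + 1 - (j : ℕ)) * g j = n - (s + 1) ^ 2} :=
        Equiv.subtypeEquivRight (fun g => by omega)
      rw [Nat.card_congr e]
    · rw [if_neg h]
      have he : IsEmpty {g : Fin (2 * s + 1) → ℕ //
          (s + 1) ^ 2 + ∑ j : Fin (2 * s + 1), (2 * s + 1 - (j : ℕ)) * g j = n} := by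
        constructor
        rintro ⟨g, hg⟩
        omega
      rw [Nat.card_of_isEmpty]
      norm_num
  rw [hmkA, hprod, mul_comm (PowerSeries.mk fun m =>
      (Nat.card {g : Fin (2 * s + 1) → ℕ //
        ∑ j : Fin (2 * s + 1), (2 * s + 1 - (j : ℕ)) * g j = m} : ℚ))
    ((X : PowerSeries ℚ) ^ ((s + 1) ^ 2)), mul_assoc, hB, mul_one]
end

section
/- The number of words of length m over the alphabet {1,…,k} avoiding the subword pattern 112 satisfies Σ_{m≥0} a_m z^m = z / (z - 1 + (1 - z²)^k) as formal power series in ℚ[[z]]. -/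
open PowerSeries

/-- Number of words of length `m` over a `k`-letter alphabet avoiding the
subword pattern `112` (no index `i` with `wᵢ = w_{i+1} < w_{i+2}`). -/
noncomputable def avoid112Words (k m : ℕ) : ℕ :=
  Nat.card {w : Fin m → Fin k // ∀ i : ℕ, ∀ h : i + 2 < m,
    ¬(w ⟨i, by omega⟩ = w ⟨i + 1, by omega⟩ ∧
      w ⟨i + 1, by omega⟩ < w ⟨i + 2, h⟩)}

namespace A112
open Finset

def avoidB {k : ℕ} : List (Fin k) → Bool
  | a :: b :: c :: l => (!(decide (a = b) && decide (b < c))) && avoidB (b :: c :: l)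
  | _ => true

variable {k : ℕ}

lemma avoidB_cons_cons (a b c : Fin k) (l : List (Fin k)) :
    avoidB (a :: b :: c :: l) = ((!(decide (a = b) && decide (b < c))) && avoidB (b :: c :: l)) := rfl

lemma avoidB_cons_ne {v u : Fin k} (h : v ≠ u) (l : List (Fin k)) :
    avoidB (v :: u :: l) = avoidB (u :: l) := by
  cases l with
  | nil => rfl
  | cons c l => simp [avoidB_cons_cons, h]

lemma avoidB_ddi {v u : Fin k} (h : v < u) (l : List (Fin k)) :
    avoidB (v :: v :: u :: l) = false := by
  simp [avoidB_cons_cons, h]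

lemma avoidB_dd {v u : Fin k} (h : ¬ v < u) (l : List (Fin k)) :
    avoidB (v :: v :: u :: l) = avoidB (v :: u :: l) := by
  simp [avoidB_cons_cons (a := v) (b := v), h]

theorem avoidB_iff : ∀ (l : List (Fin k)),
    avoidB l = true ↔ ∀ i : ℕ, ∀ h : i + 2 < l.length,
      ¬((l[i]'(by omega)) = (l[i+1]'(by omega)) ∧ (l[i+1]'(by omega)) < (l[i+2]'h))
  | [] => by simp [avoidB]
  | [a] => by simp [avoidB]
  | [a, b] => by simp [avoidB]
  | a :: b :: c :: t => by
    rw [avoidB_cons_cons, Bool.and_eq_true, avoidB_iff (b :: c :: t)]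
    constructor
    · rintro ⟨h1, h2⟩ i hi
      match i with
      | 0 => have := h1; simp at this ⊢; tauto
      | (j+1) =>
        have := h2 j (by simpa using hi)
        simpa using this
    · intro H
      refine ⟨?_, fun j hj => ?_⟩
      · have := H 0 (by simp); simp at this ⊢; tauto
      · have := H (j+1) (by simpa using hj)
        simpa using this

def cnt (k m : ℕ) (pre : List (Fin k)) : ℕ :=
  Fintype.card {w : Fin m → Fin k // avoidB (pre ++ List.ofFn w) = true}

def consEquiv {α : Type*} {m : ℕ} (P : (Fin (m+1) → α) → Prop) :
    {w : Fin (m+1) → α // P w} ≃ (v : α) × {w : Fin m → α // P (Fin.cons v w)} where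
  toFun w := ⟨w.1 0, ⟨Fin.tail w.1, by rw [Fin.cons_self_tail]; exact w.2⟩⟩
  invFun p := ⟨Fin.cons p.1 p.2.1, p.2.2⟩
  left_inv := by rintro ⟨w, hw⟩; simp [Fin.cons_self_tail]
  right_inv := by rintro ⟨v, w, hw⟩; simp [Fin.tail_cons]; rfl

lemma cnt_succ (m : ℕ) (pre : List (Fin k)) :
    cnt k (m+1) pre = ∑ v : Fin k, cnt k m (pre ++ [v]) := by
  classical
  rw [cnt, Fintype.card_congr (consEquiv _), Fintype.card_sigma]
  refine Finset.sum_congr rfl fun v _ => ?_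
  rw [cnt]
  apply Fintype.card_congr
  apply Equiv.subtypeEquivRight
  intro w
  rw [show List.ofFn (Fin.cons v w) = v :: List.ofFn w from by
    rw [List.ofFn_succ]; simp]
  simp

lemma cnt_zero (pre : List (Fin k)) (h : avoidB pre = true) : cnt k 0 pre = 1 := by
  rw [cnt]
  have : ∀ w : Fin 0 → Fin k, avoidB (pre ++ List.ofFn w) = true := by
    intro w
    rw [List.ofFn_zero, List.append_nil, h]
  simp only [this]
  simp [Fintype.card_subtype]

lemma cnt_congr (m : ℕ) {p q : List (Fin k)}
    (h : ∀ l, avoidB (p ++ l) = avoidB (q ++ l)) : cnt k m p = cnt k m q := by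
  rw [cnt, cnt]
  exact Fintype.card_congr (Equiv.subtypeEquivRight fun w => by rw [h])

lemma cnt_false (m : ℕ) {p : List (Fin k)}
    (h : ∀ l, avoidB (p ++ l) = false) : cnt k m p = 0 := by
  rw [cnt]
  simp [h]

def hg (k : ℕ) : ℕ → ((Fin k → ℕ) × (Fin k → ℕ))
  | 0 => (fun _ => 1, fun _ => 1)
  | m+1 =>
    (fun v => (∑ u ∈ Finset.univ.erase v, (hg k m).1 u) + (hg k m).2 v,
     fun v => (∑ u ∈ Finset.univ.filter (· < v), (hg k m).1 u) + (hg k m).2 v)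

def aa (k : ℕ) : ℕ → ℕ
  | 0 => 1
  | m+1 => ∑ v : Fin k, (hg k m).1 v

lemma cnt_eq_hg (m : ℕ) :
    (∀ v : Fin k, cnt k m [v] = (hg k m).1 v) ∧
    (∀ v : Fin k, cnt k m [v, v] = (hg k m).2 v) := by
  induction m with
  | zero =>
    refine ⟨fun v => ?_, fun v => ?_⟩
    · rw [cnt_zero [v] rfl]; rfl
    · rw [cnt_zero [v, v] rfl]; rfl
  | succ m ih =>
    obtain ⟨ihh, ihg⟩ := ih
    constructor
    · intro v
      rw [cnt_succ]
      simp only [List.cons_append, List.nil_append]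
      rw [← Finset.add_sum_erase _ _ (Finset.mem_univ v)]
      have h1 : cnt k m [v, v] = (hg k m).2 v := ihg v
      have h2 : ∀ u ∈ Finset.univ.erase v, cnt k m [v, u] = (hg k m).1 u := by
        intro u hu
        have hne : v ≠ u := fun e => (Finset.mem_erase.mp hu).1 e.symm
        rw [cnt_congr m (q := [u]) (fun l => by
          simp only [List.cons_append, List.nil_append]; exact avoidB_cons_ne hne l), ihh u]
      rw [h1, Finset.sum_congr rfl h2, hg]
      simp [add_comm]
    · intro v
      rw [cnt_succ]
      simp only [List.cons_append, List.nil_append]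
      have key : ∀ u : Fin k, cnt k m [v, v, u] =
          (if u < v then (hg k m).1 u else 0) + (if u = v then (hg k m).2 v else 0) := by
        intro u
        rcases lt_trichotomy u v with h | h | h
        · have hne : v ≠ u := ne_of_gt h
          rw [cnt_congr m (q := [v, u]) (fun l => by
            simp only [List.cons_append, List.nil_append]; exact avoidB_dd (not_lt_of_gt h) l),
            cnt_congr m (q := [u]) (fun l => by
            simp only [List.cons_append, List.nil_append]; exact avoidB_cons_ne hne l), ihh u]
          simp [h, hne.symm, (h.ne : u ≠ v)]
        · subst h
          rw [cnt_congr m (q := [u, u]) (fun l => by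
            simp only [List.cons_append, List.nil_append]; exact avoidB_dd (lt_irrefl u) l), ihg u]
          simp
        · rw [cnt_false m (fun l => by
            simp only [List.cons_append, List.nil_append]; exact avoidB_ddi h l)]
          simp [h.ne', not_lt_of_gt h]
      rw [Finset.sum_congr rfl (fun u _ => key u), Finset.sum_add_distrib,
          ← Finset.sum_filter, Finset.sum_ite_eq' Finset.univ v]
      simp [hg]

lemma cnt_nil_eq_aa (m : ℕ) : cnt k m [] = aa k m := by
  cases m with
  | zero => rw [cnt_zero [] rfl]; rfl
  | succ m =>
    rw [cnt_succ, aa]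
    exact Finset.sum_congr rfl fun v _ => by
      simpa using (cnt_eq_hg (k := k) m).1 v

lemma avoid112Words_eq_aa (k m : ℕ) : avoid112Words k m = aa k m := by
  have e : {w : Fin m → Fin k // ∀ i : ℕ, ∀ h : i + 2 < m,
      ¬(w ⟨i, by omega⟩ = w ⟨i + 1, by omega⟩ ∧
        w ⟨i + 1, by omega⟩ < w ⟨i + 2, h⟩)} ≃
      {w : Fin m → Fin k // avoidB ([] ++ List.ofFn w) = true} := by
    apply Equiv.subtypeEquivRight
    intro w
    simp only [List.nil_append, avoidB_iff, List.getElem_ofFn, List.length_ofFn]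
  rw [avoid112Words, Nat.card_congr e, Nat.card_eq_fintype_card, ← cnt_nil_eq_aa, cnt]

/- Power series -/

noncomputable def Hps (k : ℕ) (v : Fin k) : PowerSeries ℚ := mk fun m => ((hg k m).1 v : ℚ)
noncomputable def Gps (k : ℕ) (v : Fin k) : PowerSeries ℚ := mk fun m => ((hg k m).2 v : ℚ)
noncomputable def Sps (k : ℕ) : PowerSeries ℚ := ∑ v : Fin k, Hps k v

lemma coeff_Sps (k n : ℕ) : (coeff n) (Sps k) = ∑ v : Fin k, ((hg k n).1 v : ℚ) := by
  rw [Sps, map_sum]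
  exact Finset.sum_congr rfl fun v _ => by rw [Hps, coeff_mk]

lemma E1 (k : ℕ) : (mk fun m => (aa k m : ℚ)) = 1 + X * Sps k := by
  ext n
  cases n with
  | zero =>
    simp [aa, coeff_zero_eq_constantCoeff, map_add, map_mul, constantCoeff_X]
  | succ n =>
    rw [coeff_mk, map_add, coeff_one, coeff_succ_X_mul, coeff_Sps]
    simp [aa, Nat.cast_sum]

lemma E2 (k : ℕ) (v : Fin k) :
    Hps k v = 1 + X * ((Sps k - Hps k v) + Gps k v) := by
  ext n
  cases n with
  | zero =>
    simp [Hps, hg, coeff_zero_eq_constantCoeff, map_add, map_mul, constantCoeff_X]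
  | succ n =>
    rw [Hps, coeff_mk, map_add, coeff_one, coeff_succ_X_mul, map_add, map_sub, coeff_Sps,
      coeff_mk, Gps, coeff_mk]
    have := Finset.add_sum_erase Finset.univ (fun u => ((hg k n).1 u : ℚ)) (Finset.mem_univ v)
    show ((hg k (n+1)).1 v : ℚ) = _
    rw [hg]
    push_cast [Nat.cast_sum]
    simp only [← this]
    ring

lemma E3 (k : ℕ) (v : Fin k) :
    Gps k v = 1 + X * ((∑ u ∈ Finset.univ.filter (· < v), Hps k u) + Gps k v) := by
  ext n
  cases n with
  | zero =>
    simp [Gps, hg, coeff_zero_eq_constantCoeff, map_add, map_mul, constantCoeff_X]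
  | succ n =>
    rw [Gps, coeff_mk, map_add, coeff_one, coeff_succ_X_mul, map_add, map_sum]
    show ((hg k (n+1)).2 v : ℚ) = _
    rw [hg]
    push_cast [Nat.cast_sum]
    simp only [Gps, Hps, coeff_mk]
    ring

lemma E4 (k : ℕ) (v : Fin k) :
    Hps k v * (1 - X^2) = (1 - X) * (1 + X * Sps k) + X
      + X^2 * (∑ u ∈ Finset.univ.filter (· < v), Hps k u) := by
  linear_combination (1 - (X : PowerSeries ℚ)) * (E2 k v) + (X : PowerSeries ℚ) * (E3 k v)

lemma E6 (k : ℕ) (n : ℕ) (h : n + 1 < k) :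
    Hps k ⟨n+1, h⟩ * (1 - X^2) = Hps k ⟨n, by omega⟩ := by
  have e5 : (∑ u ∈ Finset.univ.filter (· < (⟨n+1, h⟩ : Fin k)), Hps k u)
      = (∑ u ∈ Finset.univ.filter (· < (⟨n, by omega⟩ : Fin k)), Hps k u)
        + Hps k ⟨n, by omega⟩ := by
    have hfil : Finset.univ.filter (· < (⟨n+1, h⟩ : Fin k))
        = insert (⟨n, by omega⟩ : Fin k)
            (Finset.univ.filter (· < (⟨n, by omega⟩ : Fin k))) := by
      ext u
      simp [Fin.lt_def, Fin.ext_iff]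
      omega
    rw [hfil, Finset.sum_insert (by simp [Fin.lt_def])]
    ring
  linear_combination (E4 k ⟨n+1, h⟩) - (E4 k ⟨n, by omega⟩) + (X : PowerSeries ℚ)^2 * e5

lemma E7 (K : ℕ) : ∀ (n : ℕ) (h : n < K + 1),
    Hps (K+1) ⟨n, h⟩ * (1 - X^2)^n = Hps (K+1) ⟨0, by omega⟩ := by
  intro n
  induction n with
  | zero => intro h; simp
  | succ n ih =>
    intro h
    calc Hps (K+1) ⟨n+1, h⟩ * (1 - X^2)^(n+1)
        = (Hps (K+1) ⟨n+1, h⟩ * (1 - X^2)) * (1 - X^2)^n := by ring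
      _ = Hps (K+1) ⟨n, by omega⟩ * (1 - X^2)^n := by rw [E6 (K+1) n h]
      _ = Hps (K+1) ⟨0, by omega⟩ := ih (by omega)

lemma E8 (K : ℕ) :
    Sps (K+1) * ((1 - X^2) - 1) * (1 - X^2)^K
      = Hps (K+1) ⟨0, by omega⟩ * ((1 - X^2)^(K+1) - 1) := by
  have step : ∀ v : Fin (K+1), Hps (K+1) v * (1 - X^2)^K
      = Hps (K+1) ⟨0, by omega⟩ * (1 - X^2)^(K - (v : ℕ)) := by
    intro v
    have h1 : (v : ℕ) + (K - (v : ℕ)) = K := by omega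
    calc Hps (K+1) v * (1 - X^2)^K
        = (Hps (K+1) ⟨(v : ℕ), v.isLt⟩ * (1 - X^2)^(v : ℕ)) * (1 - X^2)^(K - (v : ℕ)) := by
          rw [mul_assoc, ← pow_add, h1, Fin.eta]
      _ = Hps (K+1) ⟨0, by omega⟩ * (1 - X^2)^(K - (v : ℕ)) := by rw [E7 K (v : ℕ) v.isLt]
  calc Sps (K+1) * ((1 - X^2) - 1) * (1 - X^2)^K
      = (∑ v : Fin (K+1), Hps (K+1) v * (1 - X^2)^K) * ((1 - X^2) - 1) := by
        rw [Sps, mul_right_comm, Finset.sum_mul]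
    _ = (∑ v : Fin (K+1), Hps (K+1) ⟨0, by omega⟩ * (1 - X^2)^(K - (v : ℕ)))
          * ((1 - X^2) - 1) := by
        rw [Finset.sum_congr rfl fun v _ => step v]
    _ = (∑ n ∈ Finset.range (K+1), Hps (K+1) ⟨0, by omega⟩ * (1 - X^2)^(K - n))
          * ((1 - X^2) - 1) := by
        rw [Fin.sum_univ_eq_sum_range
          (fun n => Hps (K+1) ⟨0, by omega⟩ * (1 - X^2)^(K - n)) (K+1)]
    _ = (∑ n ∈ Finset.range (K+1), Hps (K+1) ⟨0, by omega⟩ * (1 - X^2)^n)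
          * ((1 - X^2) - 1) := by
        rw [← Finset.sum_range_reflect
          (fun n => Hps (K+1) ⟨0, by omega⟩ * (1 - X^2)^n) (K+1)]
        simp
    _ = Hps (K+1) ⟨0, by omega⟩
          * ((∑ n ∈ Finset.range (K+1), (1 - X^2)^n) * ((1 - X^2) - 1)) := by
        rw [← Finset.mul_sum]; ring
    _ = Hps (K+1) ⟨0, by omega⟩ * ((1 - X^2)^(K+1) - 1) := by rw [geom_sum_mul]

lemma E9 (K : ℕ) :
    Hps (K+1) ⟨0, by omega⟩ * (1 - X^2) = (1 - X) * (1 + X * Sps (K+1)) + X := by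
  have h0 : Finset.univ.filter (· < (⟨0, by omega⟩ : Fin (K+1))) = ∅ := by
    ext u
    simp [Fin.lt_def]
  have := E4 (K+1) ⟨0, by omega⟩
  rw [h0] at this
  simpa using this

end A112

/-- The generating function for the number of `112`-avoiding words of length
`m` over `[k]` is `z / (z - 1 + (1 - z²)^k)`, in `ℚ[[z]]`. -/
theorem avoid112Words_gf (k : ℕ) :
    (PowerSeries.mk fun m => (avoid112Words k m : ℚ)) *
        ((X : PowerSeries ℚ) - 1 + (1 - (X : PowerSeries ℚ) ^ 2) ^ k) =
      (X : PowerSeries ℚ) := by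
  have hmk : (PowerSeries.mk fun m => (avoid112Words k m : ℚ))
      = PowerSeries.mk fun m => (A112.aa k m : ℚ) := by
    ext n
    rw [coeff_mk, coeff_mk, A112.avoid112Words_eq_aa]
  rw [hmk, A112.E1]
  cases k with
  | zero =>
    have hS : A112.Sps 0 = 0 := by
      rw [A112.Sps]
      simp
    rw [hS]
    ring
  | succ K =>
    have e8 := A112.E8 K
    have e9 := A112.E9 K
    have h8 : X * A112.Sps (K+1) * ((1 - X^2)^(K+1) - 1 + X) = 1 - (1 - X^2)^(K+1) := by
      linear_combination (-(1 - (X:PowerSeries ℚ)^2)) * e8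
        - ((1 - (X:PowerSeries ℚ)^2)^(K+1) - 1) * e9
    linear_combination h8
end

section
/- For every n ≥ 1, the number of compositions of n avoiding the subword pattern 112 (no index i with σ_i = σ_{i+1} < σ_{i+2}) is at most the number of compositions of n avoiding the subword pattern 221 (no index i with σ_i = σ_{i+1} > σ_{i+2}), with strict inequality for n = 4 (values 7 vs 8). -/
/-- A list contains the subword pattern `112`: some `i` with
`lᵢ = l_{i+1} < l_{i+2}`. -/
def listHas112 (l : List ℕ) : Prop :=
  ∃ i : ℕ, i + 2 < l.length ∧
    l.getD i 0 = l.getD (i + 1) 0 ∧ l.getD (i + 1) 0 < l.getD (i + 2) 0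

/-- A list contains the subword pattern `221`: some `i` with
`lᵢ = l_{i+1} > l_{i+2}`. -/
def listHas221 (l : List ℕ) : Prop :=
  ∃ i : ℕ, i + 2 < l.length ∧
    l.getD i 0 = l.getD (i + 1) 0 ∧ l.getD (i + 2) 0 < l.getD (i + 1) 0

/-- Number of compositions of `n` avoiding the subword pattern `112`. -/
noncomputable def avoid112Comp (n : ℕ) : ℕ :=
  Nat.card {c : Composition n // ¬listHas112 c.blocks}

/-- Number of compositions of `n` avoiding the subword pattern `221`. -/
noncomputable def avoid221Comp (n : ℕ) : ℕ :=
  Nat.card {c : Composition n // ¬listHas221 c.blocks}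

/-!
Read compositions backwards, so that they are built by prepending parts. Then `112` and `221`
become windows `x, y, y` with `y < x`, resp. `y > x`, and whether prepending a part `v` creates
one depends only on the current first part and on whether the first two parts are equal. Sorting
the avoiders of `n` by these data gives numbers `F(n, v)` (first part `v`, second part different)
and `T(n, v)` (first two parts both `v`), which satisfy recursions in `n - v`. Strong induction
on `n` shows `F₁₁₂ ≤ F₂₂₁`, `T₁₁₂ ≤ T₂₂₁` and, for `v ≥ 2`, `F₁₁₂ + T₁₁₂ ≤ F₂₂₁`. The last
inequality absorbs the one place where the `112` side is ahead: replacing a first part `v ≥ 2` by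
`v` parts `1` injects the `112`-avoiders starting with `v` into those starting with `1, 1`.
-/

open Finset

-- Structural recursion (a composition of `n + 1` starts with a part `1` or arises from one of
-- `n` by incrementing its first part), so that `decide` can evaluate it.
def compositionLists : ℕ → Finset (List ℕ)
  | 0 => {[]}
  | n + 1 => (compositionLists n).image (1 :: ·) ∪
      (compositionLists n).image fun l => (l.headD 0 + 1) :: l.tail

theorem mem_compositionLists {n : ℕ} {l : List ℕ} :
    l ∈ compositionLists n ↔ l.sum = n ∧ ∀ x ∈ l, 0 < x := by
  induction n generalizing l with
  | zero => cases l <;> simp [compositionLists]; omega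
  | succ n ih =>
    simp only [compositionLists, mem_union, mem_image, ih]
    constructor
    · rintro (⟨l, ⟨hs, hp⟩, rfl⟩ | ⟨_ | ⟨a, t⟩, ⟨hs, hp⟩, rfl⟩) <;> simp_all <;> omega
    · rintro ⟨hs, hp⟩
      obtain _ | ⟨a, t⟩ := l
      · simp at hs
      simp only [List.sum_cons, List.mem_cons, forall_eq_or_imp] at hs hp
      obtain ⟨ha, hp⟩ := hp
      obtain rfl | ha := Nat.eq_or_lt_of_le ha
      · exact .inl ⟨t, ⟨by omega, hp⟩, rfl⟩
      · refine .inr ⟨(a - 1) :: t, ⟨?_, ?_⟩, ?_⟩ <;> simp_all <;> omega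

theorem cons_mem_compositionLists {n v : ℕ} {ρ : List ℕ} (hv : 1 ≤ v) :
    v :: ρ ∈ compositionLists n ↔ v ≤ n ∧ ρ ∈ compositionLists (n - v) := by
  simp only [mem_compositionLists, List.sum_cons, List.mem_cons, forall_eq_or_imp]
  constructor
  · rintro ⟨hs, -, hp⟩
    exact ⟨by omega, by omega, hp⟩
  · rintro ⟨hvn, hs, hp⟩
    exact ⟨by omega, hv, hp⟩

theorem mem_Icc_of_cons_mem_compositionLists {n v : ℕ} {ρ : List ℕ}
    (h : v :: ρ ∈ compositionLists n) : v ∈ Icc 1 n := by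
  simp only [mem_compositionLists, List.sum_cons, List.mem_cons, forall_eq_or_imp] at h
  exact mem_Icc.mpr ⟨h.2.1, by omega⟩

theorem card_filter_compositionLists_eq_sum_head {m : ℕ} (hm : 1 ≤ m) (p : List ℕ → Prop)
    [DecidablePred p] :
    #{ρ ∈ compositionLists m | p ρ} =
      ∑ u ∈ Icc 1 m, #{ρ ∈ compositionLists m | p ρ ∧ ρ.head? = some u} := by
  rw [card_eq_sum_card_fiberwise (f := List.head?) (t := (Icc 1 m).map .some), sum_map]
  · simp only [filter_filter, Function.Embedding.some_apply]
  · rintro (_ | ⟨u, ρ⟩) hρ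
    · simp [mem_compositionLists] at hρ
      omega
    · simpa using mem_Icc_of_cons_mem_compositionLists (mem_filter.mp hρ).1

theorem natCard_composition_eq (n : ℕ) (p : List ℕ → Prop) [DecidablePred p] :
    Nat.card {c : Composition n // p c.blocks.reverse} = #{r ∈ compositionLists n | p r} := by
  rw [← Nat.card_eq_finsetCard]
  refine Nat.card_congr
    { toFun c := ⟨c.1.blocks.reverse, mem_filter.mpr ⟨mem_compositionLists.mpr
        ⟨by simp, fun x hx => c.1.blocks_pos (List.mem_reverse.mp hx)⟩, c.2⟩⟩
      invFun r :=
        have hr := mem_filter.mp r.2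
        ⟨⟨r.1.reverse, fun hx => (mem_compositionLists.mp hr.1).2 _ (List.mem_reverse.mp hx),
          by simpa using (mem_compositionLists.mp hr.1).1⟩, by simpa using hr.2⟩
      left_inv c := by ext1; ext1; simp
      right_inv r := by ext1; simp }

theorem List.triple_infix_iff_getD {α : Type*} {a b c d : α} {l : List α} :
    [a, b, c] <:+: l ↔
      ∃ i, i + 2 < l.length ∧ l.getD i d = a ∧ l.getD (i + 1) d = b ∧ l.getD (i + 2) d = c := by
  simp only [List.infix_iff_getElem?, List.getD_eq_getElem?_getD, List.length_cons,
    List.length_nil]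
  constructor
  · rintro ⟨i, hi, h⟩
    have h0 := h 0 (by omega)
    have h1 := h 1 (by omega)
    have h2 := h 2 (by omega)
    simp only [Nat.add_comm _ i, Nat.add_zero] at h0 h1 h2
    exact ⟨i, by omega, by simp [h0], by simp [h1], by simp [h2]⟩
  · rintro ⟨i, hi, rfl, rfl, rfl⟩
    refine ⟨i, by omega, fun j hj => ?_⟩
    interval_cases j <;>
      simp [Nat.add_comm, hi, (by omega : i + 1 < l.length), (by omega : i < l.length)]

-- On the reversal of a composition, `R = (· < ·)` detects `112` and `R = (· > ·)` detects `221`.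
def hasDoubleAfter (R : ℕ → ℕ → Prop) [DecidableRel R] : List ℕ → Bool
  | x :: y :: z :: t => decide (y = z ∧ R y x) || hasDoubleAfter R (y :: z :: t)
  | _ => false

def startsDoubled : List ℕ → Bool
  | x :: y :: _ => decide (x = y)
  | _ => false

@[simp]
theorem startsDoubled_cons_cons (x y : ℕ) (t : List ℕ) :
    startsDoubled (x :: y :: t) = decide (x = y) := rfl

section Pattern
variable (R : ℕ → ℕ → Prop) [DecidableRel R]

theorem hasDoubleAfter_cons_cons (v u : ℕ) (t : List ℕ) :
    hasDoubleAfter R (v :: u :: t) =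
      (hasDoubleAfter R (u :: t) || startsDoubled (u :: t) && decide (R u v)) := by
  cases t <;> simp [hasDoubleAfter, startsDoubled, Bool.or_comm]

theorem hasDoubleAfter_eq_false_of_cons {v : ℕ} {ρ : List ℕ}
    (h : hasDoubleAfter R (v :: ρ) = false) : hasDoubleAfter R ρ = false := by
  obtain _ | ⟨u, t⟩ := ρ
  · rfl
  · simp_all [hasDoubleAfter_cons_cons]

theorem hasDoubleAfter_iff_infix (r : List ℕ) :
    hasDoubleAfter R r ↔ ∃ x y, R y x ∧ [x, y, y] <:+: r := by
  induction r with
  | nil => simp [hasDoubleAfter]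
  | cons v ρ ih =>
    obtain _ | ⟨u, t⟩ := ρ
    · simpa [hasDoubleAfter] using fun _ _ _ h => by simpa using h.length_le
    rw [hasDoubleAfter_cons_cons, Bool.or_eq_true, ih]
    simp only [List.infix_cons_iff, List.cons_prefix_cons]
    cases t <;> simp [startsDoubled]
    grind

theorem hasDoubleAfter_reverse_iff (l : List ℕ) :
    hasDoubleAfter R l.reverse ↔ ∃ i, i + 2 < l.length ∧
      l.getD i 0 = l.getD (i + 1) 0 ∧ R (l.getD (i + 1) 0) (l.getD (i + 2) 0) := by
  have hrev (x y : ℕ) : [x, y, y] <:+: l.reverse ↔ [y, y, x] <:+: l :=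
    List.reverse_infix (l₁ := [y, y, x])
  simp only [hasDoubleAfter_iff_infix, hrev]
  constructor
  · rintro ⟨c, b, hbc, hi⟩
    obtain ⟨i, hi, h0, h1, h2⟩ := List.triple_infix_iff_getD (d := 0).mp hi
    exact ⟨i, hi, h0.trans h1.symm, h1 ▸ h2 ▸ hbc⟩
  · rintro ⟨i, hi, h01, h12⟩
    exact ⟨_, _, h12, List.triple_infix_iff_getD.mpr ⟨i, hi, h01, rfl, rfl⟩⟩

end Pattern

theorem listHas112_iff (l : List ℕ) : listHas112 l ↔ hasDoubleAfter (· < ·) l.reverse :=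
  (hasDoubleAfter_reverse_iff (· < ·) l).symm

theorem listHas221_iff (l : List ℕ) : listHas221 l ↔ hasDoubleAfter (· > ·) l.reverse :=
  (hasDoubleAfter_reverse_iff (· > ·) l).symm

section Counting
variable (R : ℕ → ℕ → Prop) [DecidableRel R]

def avoidersWithHead (n v : ℕ) : Finset (List ℕ) :=
  {r ∈ compositionLists n | hasDoubleAfter R r = false ∧ r.head? = some v}

def numDoubled (n v : ℕ) : ℕ := #{r ∈ avoidersWithHead R n v | startsDoubled r}

def numUndoubled (n v : ℕ) : ℕ := #{r ∈ avoidersWithHead R n v | ¬ startsDoubled r}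

theorem card_avoidersWithHead (n v : ℕ) :
    #(avoidersWithHead R n v) = numUndoubled R n v + numDoubled R n v := by
  rw [numUndoubled, numDoubled, add_comm, card_filter_add_card_filter_not]

theorem avoidersWithHead_eq_empty {n v : ℕ} (h : n < v) : avoidersWithHead R n v = ∅ := by
  refine filter_false_of_mem fun r hr ⟨_, hv⟩ => ?_
  obtain ⟨t, rfl⟩ := List.head?_eq_some_iff.mp hv
  have := mem_Icc.mp (mem_Icc_of_cons_mem_compositionLists hr)
  omega

theorem avoidersWithHead_eq_map {n v : ℕ} (hv : 1 ≤ v) (hvn : v ≤ n) :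
    avoidersWithHead R n v =
      ({ρ ∈ compositionLists (n - v) | hasDoubleAfter R (v :: ρ) = false}).map
        ⟨(v :: ·), List.cons_injective⟩ := by
  ext (_ | ⟨u, ρ⟩)
  · simp [avoidersWithHead]
  · simp only [avoidersWithHead, mem_filter, mem_map, Function.Embedding.coeFn_mk,
      List.cons.injEq, List.head?_cons, Option.some.injEq]
    constructor
    · rintro ⟨hr, hA, rfl⟩
      exact ⟨ρ, ⟨((cons_mem_compositionLists hv).mp hr).2, hA⟩, rfl, rfl⟩
    · rintro ⟨ρ, ⟨hρ, hA⟩, rfl, rfl⟩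
      exact ⟨(cons_mem_compositionLists hv).mpr ⟨hvn, hρ⟩, hA, rfl⟩

theorem avoidersWithHead_self {v : ℕ} (hv : 1 ≤ v) : avoidersWithHead R v v = {[v]} := by
  rw [avoidersWithHead_eq_map R hv le_rfl, Nat.sub_self]
  rfl

variable {R}

theorem numDoubled_eq_card (hR : ∀ a, ¬ R a a) {n v : ℕ} (hv : 1 ≤ v) (hvn : v ≤ n) :
    numDoubled R n v = #(avoidersWithHead R (n - v) v) := by
  rw [numDoubled, avoidersWithHead_eq_map R hv hvn, filter_map, card_map, avoidersWithHead,
    filter_filter]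
  refine congrArg card (filter_congr fun ρ _ => ?_)
  obtain _ | ⟨u, t⟩ := ρ
  · simp [startsDoubled]
  simp only [List.head?_cons, Option.some.injEq, Function.comp_apply,
    Function.Embedding.coeFn_mk, startsDoubled_cons_cons, decide_eq_true_eq]
  by_cases huv : u = v
  · subst huv
    simp [hasDoubleAfter_cons_cons, hR]
  · simp [huv, Ne.symm huv]

theorem numUndoubled_eq_sum {n v : ℕ} (hv : 1 ≤ v) (hvn : v < n) :
    numUndoubled R n v = ∑ u ∈ Icc 1 (n - v), if u = v then 0 else
      if R u v then numUndoubled R (n - v) u else #(avoidersWithHead R (n - v) u) := by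
  rw [numUndoubled, avoidersWithHead_eq_map R hv hvn.le, filter_map, card_map, filter_filter,
    card_filter_compositionLists_eq_sum_head (by omega)]
  refine sum_congr rfl fun u _ => ?_
  split_ifs with huv hRuv
  · subst huv
    refine card_eq_zero.mpr (filter_eq_empty_iff.mpr ?_)
    rintro (_ | ⟨w, t⟩) _ <;> simp
    grind
  · rw [numUndoubled, avoidersWithHead, filter_filter]
    refine congrArg card (filter_congr ?_)
    rintro (_ | ⟨w, t⟩) _ <;> simp [hasDoubleAfter_cons_cons]
    grind
  · rw [avoidersWithHead]
    refine congrArg card (filter_congr ?_)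
    rintro (_ | ⟨w, t⟩) _ <;> simp [hasDoubleAfter_cons_cons]
    grind

end Counting

theorem hasDoubleAfter_lt_one_cons {ρ : List ℕ} (hρ : ∀ x ∈ ρ, 0 < x) :
    hasDoubleAfter (· < ·) (1 :: ρ) = hasDoubleAfter (· < ·) ρ := by
  obtain _ | ⟨u, t⟩ := ρ
  · rfl
  · have hu := hρ u List.mem_cons_self
    simp [hasDoubleAfter_cons_cons, hu.ne']

theorem hasDoubleAfter_lt_replicate_one_append (k : ℕ) {ρ : List ℕ} (hρ : ∀ x ∈ ρ, 0 < x) :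
    hasDoubleAfter (· < ·) (List.replicate k 1 ++ ρ) = hasDoubleAfter (· < ·) ρ := by
  induction k with
  | zero => rfl
  | succ k ih =>
    rw [List.replicate_succ, List.cons_append, hasDoubleAfter_lt_one_cons, ih]
    simp only [List.mem_append, List.mem_replicate]
    rintro x (⟨-, rfl⟩ | hx)
    exacts [Nat.one_pos, hρ x hx]

theorem card_avoidersWithHead_lt_le_numDoubled_one {m v : ℕ} (hv : 2 ≤ v) :
    #(avoidersWithHead (· < ·) m v) ≤ numDoubled (· < ·) m 1 := by
  rw [numDoubled]
  refine card_le_card_of_injOn (fun r => List.replicate v 1 ++ r.tail) ?_ ?_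
  · intro r hr
    simp only [avoidersWithHead, mem_coe, mem_filter, List.head?_eq_some_iff] at hr ⊢
    obtain ⟨hr, hA, t, rfl⟩ := hr
    obtain ⟨hs, hp⟩ := mem_compositionLists.mp hr
    have ht : ∀ x ∈ t, 0 < x := fun x hx => hp x (by simp [hx])
    obtain ⟨k, rfl⟩ : ∃ k, v = k + 2 := ⟨v - 2, by omega⟩
    simp only [List.tail_cons]
    refine ⟨⟨mem_compositionLists.mpr ⟨?_, ?_⟩, ?_, ?_⟩, ?_⟩
    · simp at hs ⊢
      omega
    · simp only [List.mem_append, List.mem_replicate]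
      rintro x (⟨-, rfl⟩ | hx)
      exacts [Nat.one_pos, ht x hx]
    · rw [hasDoubleAfter_lt_replicate_one_append _ ht]
      exact hasDoubleAfter_eq_false_of_cons _ hA
    · simp [List.replicate_succ]
    · simp [List.replicate_succ]
  · intro r hr r' hr' h
    simp only [avoidersWithHead, mem_coe, mem_filter, List.head?_eq_some_iff] at hr hr'
    obtain ⟨-, -, t, rfl⟩ := hr
    obtain ⟨-, -, t', rfl⟩ := hr'
    simpa using h

def CountsLe (m : ℕ) : Prop :=
  ∀ u, 1 ≤ u →
    numUndoubled (· < ·) m u ≤ numUndoubled (· > ·) m u ∧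
    numDoubled (· < ·) m u ≤ numDoubled (· > ·) m u ∧
    (2 ≤ u → #(avoidersWithHead (· < ·) m u) ≤ numUndoubled (· > ·) m u)

namespace CountsLe

theorem summand_le {m v u : ℕ} (ih : CountsLe m) (hv : 1 ≤ v) (hu : 1 ≤ u) :
    (if u = v then 0 else
      if u < v then numUndoubled (· < ·) m u else #(avoidersWithHead (· < ·) m u)) ≤
    (if u = v then 0 else
      if u > v then numUndoubled (· > ·) m u else #(avoidersWithHead (· > ·) m u)) := by
  obtain ⟨hF, -, hH⟩ := ih u hu
  have := card_avoidersWithHead (· > ·) m u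
  split_ifs <;> omega

variable {n v : ℕ}

theorem numUndoubled_le (ih : CountsLe (n - v)) (hvn : v < n) (hv : 1 ≤ v) :
    numUndoubled (· < ·) n v ≤ numUndoubled (· > ·) n v := by
  rw [numUndoubled_eq_sum hv hvn, numUndoubled_eq_sum hv hvn]
  exact sum_le_sum fun u hu => ih.summand_le hv (mem_Icc.mp hu).1

theorem numDoubled_le (ih : CountsLe (n - v)) (hvn : v < n) (hv : 1 ≤ v) :
    numDoubled (· < ·) n v ≤ numDoubled (· > ·) n v := by
  rw [numDoubled_eq_card (R := (· < ·)) lt_irrefl hv hvn.le,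
    numDoubled_eq_card (R := (· > ·)) lt_irrefl hv hvn.le,
    card_avoidersWithHead, card_avoidersWithHead]
  obtain ⟨hF, hT, -⟩ := ih v hv
  omega

theorem card_avoidersWithHead_le (ih : CountsLe (n - v)) (hvn : v < n) (hv : 2 ≤ v) :
    #(avoidersWithHead (· < ·) n v) ≤ numUndoubled (· > ·) n v := by
  have h1 : 1 ∈ Icc 1 (n - v) := mem_Icc.mpr ⟨le_rfl, by omega⟩
  rw [card_avoidersWithHead, numDoubled_eq_card (R := (· < ·)) lt_irrefl (by omega) hvn.le,
    numUndoubled_eq_sum (by omega) hvn, numUndoubled_eq_sum (by omega) hvn,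
    ← add_sum_erase _ _ h1, ← add_sum_erase _ _ h1]
  have hrest := sum_le_sum (s := (Icc 1 (n - v)).erase 1) fun u hu =>
    ih.summand_le (v := v) (by omega) (mem_Icc.mp (mem_of_mem_erase hu)).1
  have hreplicate := card_avoidersWithHead_lt_le_numDoubled_one (m := n - v) hv
  obtain ⟨hF, hT, -⟩ := ih 1 le_rfl
  have := card_avoidersWithHead (· > ·) (n - v) 1
  simp only [show (1 : ℕ) ≠ v by omega, show (1 : ℕ) < v by omega, show ¬(1 : ℕ) > v by omega,
    if_false, if_true]
  omega

end CountsLe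

theorem countsLe (n : ℕ) : CountsLe n := by
  induction n using Nat.strong_induction_on with
  | _ n ih =>
    intro v hv
    obtain hvn | rfl | hnv := lt_trichotomy v n
    · have ih := ih (n - v) (by omega)
      exact ⟨ih.numUndoubled_le hvn hv, ih.numDoubled_le hvn hv,
        fun hv2 => ih.card_avoidersWithHead_le hvn hv2⟩
    · simp [numUndoubled, numDoubled, avoidersWithHead_self _ hv, filter_singleton,
        startsDoubled]
    · simp [numUndoubled, numDoubled, avoidersWithHead_eq_empty _ hnv]

theorem card_avoiders_lt_le_gt {n : ℕ} (hn : 1 ≤ n) :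
    #{r ∈ compositionLists n | hasDoubleAfter (· < ·) r = false} ≤
      #{r ∈ compositionLists n | hasDoubleAfter (· > ·) r = false} := by
  rw [card_filter_compositionLists_eq_sum_head hn, card_filter_compositionLists_eq_sum_head hn]
  refine sum_le_sum fun v hv => ?_
  change #(avoidersWithHead _ n v) ≤ #(avoidersWithHead _ n v)
  obtain ⟨hF, hT, hH⟩ := countsLe n v (mem_Icc.mp hv).1
  have hB := card_avoidersWithHead (· > ·) n v
  rcases Nat.lt_or_ge v 2 with hv1 | hv2
  · rw [card_avoidersWithHead]
    omega
  · have := hH hv2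
    omega

theorem avoid112Comp_eq (n : ℕ) :
    avoid112Comp n = #{r ∈ compositionLists n | hasDoubleAfter (· < ·) r = false} := by
  simp only [avoid112Comp, listHas112_iff, Bool.not_eq_true]
  exact natCard_composition_eq n (hasDoubleAfter (· < ·) · = false)

theorem avoid221Comp_eq (n : ℕ) :
    avoid221Comp n = #{r ∈ compositionLists n | hasDoubleAfter (· > ·) r = false} := by
  simp only [avoid221Comp, listHas221_iff, Bool.not_eq_true]
  exact natCard_composition_eq n (hasDoubleAfter (· > ·) · = false)

/-- For every `n ≥ 1`, there are at most as many `112`-avoiding compositions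
of `n` as `221`-avoiding ones, with strict inequality at `n = 4`
(`7` versus `8`). -/
theorem avoid112_le_avoid221 :
    (∀ n : ℕ, 1 ≤ n → avoid112Comp n ≤ avoid221Comp n) ∧
    avoid112Comp 4 = 7 ∧ avoid221Comp 4 = 8 := by
  refine ⟨fun n hn => ?_, ?_, ?_⟩
  · rw [avoid112Comp_eq, avoid221Comp_eq]
    exact card_avoiders_lt_le_gt hn
  · rw [avoid112Comp_eq]
    decide
  · rw [avoid221Comp_eq]
    decide
end
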